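/- arXiv:2101.10867 — 6 statements merged into one kernel-verified Lean document; each statement's English description precedes it below -/
import Mathlib

section
/- Let f ∈ L^∞ be supported on an interval I ⊆ [0,1], ψ : I → [0,1] a continuously differentiable, monotonically increasing map, and ρ : ψ(I) → ℝ bounded measurable. Define f_{ψ,ρ}(x) = f(ψ⁻¹(x))ρ(x) on ψ(I) and 0 elsewhere. Then for all p ∈ [1,∞], ‖V(f - f_{ψ,ρ})‖_p ≤ ε‖f‖_p, where ε = max_{x∈I}|x - ψ(x)| + max_{x∈I}|1 - ρ(ψ(x))ψ'(x)| and V is the Volterra operator. -/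
open MeasureTheory Set intervalIntegral
open scoped ENNReal NNReal

noncomputable def volterra (f : ℝ → ℝ) (x : ℝ) : ℝ := ∫ t in (0:ℝ)..x, f t

private lemma indicator_one_mul_self (E : Set (ℝ × ℝ)) (q : ℝ × ℝ) (c : ℝ≥0∞) :
    E.indicator (1 : ℝ × ℝ → ℝ≥0∞) q * (E.indicator 1 q * c) = E.indicator 1 q * c := by
  by_cases h : q ∈ E <;> simp [h]

private lemma indicator_one_rpow (E : Set (ℝ × ℝ)) (q : ℝ × ℝ) {s : ℝ} (hs : 0 < s) :
    E.indicator (1 : ℝ × ℝ → ℝ≥0∞) q ^ s = E.indicator 1 q := by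
  by_cases h : q ∈ E <;> simp [h, ENNReal.zero_rpow_of_pos hs]

/-- Schur-test type bound for a kernel which is the indicator of a set `E`, with slice
measures bounded by `C`. -/
private lemma schur_bound (μ : Measure ℝ) [IsFiniteMeasure μ]
    {E : Set (ℝ × ℝ)} (hE : MeasurableSet E) (C : ℝ≥0∞)
    (h1 : ∀ x, μ {t | (x, t) ∈ E} ≤ C) (h2 : ∀ t, μ {x | (x, t) ∈ E} ≤ C)
    {g : ℝ → ℝ≥0∞} (hg : Measurable g) {r : ℝ} (hr : 1 ≤ r) :
    ∫⁻ x, (∫⁻ t, E.indicator 1 (x, t) * g t ∂μ) ^ r ∂μ ≤ C ^ r * ∫⁻ t, g t ^ r ∂μ := by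
  have hr0 : (0:ℝ) < r := lt_of_lt_of_le one_pos hr
  have hrne : r ≠ 0 := ne_of_gt hr0
  have hk : Measurable (E.indicator (1 : ℝ × ℝ → ℝ≥0∞)) := measurable_one.indicator hE
  have hslice1 : ∀ x : ℝ, MeasurableSet {t | (x, t) ∈ E} := fun x =>
    measurable_prodMk_left hE
  have hslice2 : ∀ t : ℝ, MeasurableSet {x | (x, t) ∈ E} := fun t =>
    measurable_prodMk_right hE
  have hindx : ∀ x : ℝ, ∀ c : ℝ → ℝ≥0∞, ∀ t,
      E.indicator (1 : ℝ × ℝ → ℝ≥0∞) (x, t) * c t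
        = {t' | (x, t') ∈ E}.indicator (fun t' => c t') t := by
    intro x c t
    by_cases h : (x, t) ∈ E
    · simp [h, Set.indicator_of_mem, h, Set.mem_setOf_eq]
    · simp [h, Set.indicator_of_notMem, Set.mem_setOf_eq]
  have hindt : ∀ t : ℝ, ∀ c : ℝ≥0∞, ∀ x,
      E.indicator (1 : ℝ × ℝ → ℝ≥0∞) (x, t) * c
        = {x' | (x', t) ∈ E}.indicator (fun _ => c) x := by
    intro t c x
    by_cases h : (x, t) ∈ E
    · simp [h, Set.mem_setOf_eq]
    · simp [h, Set.mem_setOf_eq]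
  have hkx : ∀ x : ℝ, Measurable fun t => E.indicator (1 : ℝ × ℝ → ℝ≥0∞) (x, t) :=
    fun x => hk.comp measurable_prodMk_left
  -- inner Hölder estimate
  have h_inner : ∀ x, (∫⁻ t, E.indicator 1 (x, t) * g t ∂μ)
      ≤ C ^ (1 - 1/r) * (∫⁻ t, E.indicator 1 (x, t) * g t ^ r ∂μ) ^ (1/r) := by
    intro x
    rcases eq_or_lt_of_le hr with h1r | h1r
    · rw [← h1r]
      simp
    · have hconj : (r/(r-1)).HolderConjugate r :=
        (Real.HolderConjugate.conjExponent h1r).symm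
      have hmeas1 : AEMeasurable (fun t => E.indicator (1 : ℝ × ℝ → ℝ≥0∞) (x, t)) μ :=
        (hkx x).aemeasurable
      have hmeas2 : AEMeasurable (fun t => E.indicator (1 : ℝ × ℝ → ℝ≥0∞) (x, t) * g t) μ :=
        ((hkx x).mul hg).aemeasurable
      have H := ENNReal.lintegral_mul_le_Lp_mul_Lq μ hconj hmeas1 hmeas2
      have hL : ∫⁻ t, ((fun t => E.indicator (1 : ℝ × ℝ → ℝ≥0∞) (x, t)) *
          fun t => E.indicator (1 : ℝ × ℝ → ℝ≥0∞) (x, t) * g t) t ∂μ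
          = ∫⁻ t, E.indicator 1 (x, t) * g t ∂μ := by
        apply lintegral_congr
        intro t
        simp only [Pi.mul_apply]
        exact indicator_one_mul_self E (x, t) (g t)
      rw [hL] at H
      refine le_trans H ?_
      have hpos1 : (0:ℝ) < r/(r-1) := div_pos (lt_trans one_pos h1r) (by linarith)
      have e1 : ∫⁻ t, (E.indicator (1 : ℝ × ℝ → ℝ≥0∞) (x, t)) ^ (r/(r-1)) ∂μ
          = μ {t | (x, t) ∈ E} := by
        rw [← setLIntegral_one]
        rw [← lintegral_indicator (hslice1 x)]
        apply lintegral_congr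
        intro t
        rw [indicator_one_rpow E (x, t) hpos1]
        have := hindx x (fun _ => (1:ℝ≥0∞)) t
        simpa using this
      have e2 : ∀ t, (E.indicator (1 : ℝ × ℝ → ℝ≥0∞) (x, t) * g t) ^ r
          = E.indicator 1 (x, t) * g t ^ r := by
        intro t
        rw [ENNReal.mul_rpow_of_nonneg _ _ hr0.le, indicator_one_rpow E (x, t) hr0]
      rw [e1]
      simp only [e2]
      have hexp : 1/(r/(r-1)) = 1 - 1/r := by
        rw [one_div_div]
        field_simp
      rw [hexp]
      have hexp0 : (0:ℝ) ≤ 1 - 1/r := by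
        have : 1/r ≤ 1 := by rw [div_le_one hr0]; exact hr
        linarith
      have := ENNReal.rpow_le_rpow (h1 x) hexp0
      exact mul_le_mul_left this _
  calc ∫⁻ x, (∫⁻ t, E.indicator 1 (x, t) * g t ∂μ) ^ r ∂μ
      ≤ ∫⁻ x, (C ^ (1 - 1/r) * (∫⁻ t, E.indicator 1 (x, t) * g t ^ r ∂μ) ^ (1/r)) ^ r ∂μ := by
        apply lintegral_mono
        intro x
        exact ENNReal.rpow_le_rpow (h_inner x) hr0.le
    _ = ∫⁻ x, C ^ (r - 1) * (∫⁻ t, E.indicator 1 (x, t) * g t ^ r ∂μ) ∂μ := by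
        apply lintegral_congr
        intro x
        rw [ENNReal.mul_rpow_of_nonneg _ _ hr0.le, ← ENNReal.rpow_mul, ← ENNReal.rpow_mul]
        congr 1
        · congr 1
          field_simp
        · rw [one_div, inv_mul_cancel₀ hrne, ENNReal.rpow_one]
    _ = C ^ (r - 1) * ∫⁻ x, (∫⁻ t, E.indicator 1 (x, t) * g t ^ r ∂μ) ∂μ := by
        apply lintegral_const_mul
        apply Measurable.lintegral_prod_right (f := fun x t => E.indicator 1 (x, t) * g t ^ r)
        exact (hk.comp measurable_id).mul ((hg.comp measurable_snd).pow_const r)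
    _ = C ^ (r - 1) * ∫⁻ t, (∫⁻ x, E.indicator 1 (x, t) * g t ^ r ∂μ) ∂μ := by
        congr 1
        apply lintegral_lintegral_swap
        exact ((hk.comp measurable_id).mul ((hg.comp measurable_snd).pow_const r)).aemeasurable
    _ ≤ C ^ (r - 1) * ∫⁻ t, C * g t ^ r ∂μ := by
        gcongr with t
        have : ∀ x, E.indicator (1 : ℝ × ℝ → ℝ≥0∞) (x, t) * g t ^ r
            = {x' | (x', t) ∈ E}.indicator (fun _ => g t ^ r) x := fun x => hindt t (g t ^ r) x
        simp only [this]
        rw [lintegral_indicator_const (hslice2 t)]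
        calc g t ^ r * μ {x' | (x', t) ∈ E} ≤ g t ^ r * C := by gcongr; exact h2 t
          _ = C * g t ^ r := mul_comm _ _
    _ = C ^ (r - 1) * (C * ∫⁻ t, g t ^ r ∂μ) := by rw [lintegral_const_mul _ (hg.pow_const r)]
    _ = C ^ r * ∫⁻ t, g t ^ r ∂μ := by
        rw [← mul_assoc]
        congr 1
        have : C ^ (r - 1) * C = C ^ (r - 1) * C ^ (1:ℝ) := by rw [ENNReal.rpow_one]
        rw [this, ← ENNReal.rpow_add_of_nonneg _ _ (by linarith) zero_le_one]
        congr 1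
        ring

/-- Theorem (distance between perturbations): if `f ∈ L^∞` is supported on an
interval `I ⊆ [0,1]`, `ψ` is a `C¹` increasing change of variables on `I` with
inverse `φ`, `ρ` is bounded measurable on `ψ(I)`, and
`f_{ψ,ρ} = (f ∘ ψ⁻¹)·ρ` on `ψ(I)` (zero elsewhere), then
`‖V(f - f_{ψ,ρ})‖_p ≤ (ε₁ + ε₂) ‖f‖_p`, where `ε₁` bounds `|x - ψ(x)|` on `I` and
`ε₂` bounds `|1 - ρ(ψ(x))ψ'(x)|` on `I`. -/
theorem volterra_perturbation (p : ℝ≥0∞) (hp : 1 ≤ p)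
    (I : Set ℝ) (a b : ℝ) (hI : I = Icc a b) (hIsub : I ⊆ Icc (0:ℝ) 1)
    (f : ℝ → ℝ) (hf : Measurable f) (M : ℝ) (hfb : ∀ x, |f x| ≤ M)
    (hsupp : ∀ x ∉ I, f x = 0)
    (ψ φ : ℝ → ℝ) (hψdiff : ContDiff ℝ 1 ψ) (hψmono : StrictMonoOn ψ I)
    (hψmaps : MapsTo ψ I (Icc (0:ℝ) 1))
    (hφ : ∀ x ∈ I, φ (ψ x) = x)
    (ρ : ℝ → ℝ) (hρ : Measurable ρ) (Mρ : ℝ) (hρb : ∀ y ∈ ψ '' I, |ρ y| ≤ Mρ)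
    (ε₁ ε₂ : ℝ)
    (hε₁ : ∀ x ∈ I, |x - ψ x| ≤ ε₁)
    (hε₂ : ∀ x ∈ I, |1 - ρ (ψ x) * deriv ψ x| ≤ ε₂) :
    eLpNorm
        (volterra (fun x => f x - (ψ '' I).indicator (fun y => f (φ y) * ρ y) x))
        p (volume.restrict (Icc (0:ℝ) 1))
      ≤ ENNReal.ofReal (ε₁ + ε₂) * eLpNorm f p (volume.restrict (Icc (0:ℝ) 1)) := by
  subst hI
  haveI hprob : IsProbabilityMeasure (volume.restrict (Icc (0:ℝ) 1)) :=
    ⟨by rw [Measure.restrict_apply_univ, Real.volume_Icc]; norm_num⟩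
  rcases lt_or_ge b a with hba | hab
  · -- `I` is empty
    have hI0 : Icc a b = (∅ : Set ℝ) := Icc_eq_empty (not_le.2 hba)
    have hf0 : ∀ x, f x = 0 := fun x => hsupp x (by rw [hI0]; exact notMem_empty x)
    have hzero : (fun x => f x - (ψ '' Icc a b).indicator (fun y => f (φ y) * ρ y) x)
        = fun _ => (0:ℝ) := by
      funext x; rw [hI0]; simp [hf0]
    rw [hzero]
    have hv : volterra (fun _ => (0:ℝ)) = fun _ => (0:ℝ) := by
      funext x; simp [volterra]
    rw [hv, eLpNorm_zero']
    exact zero_le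
  rcases eq_or_lt_of_le hab with hab' | hlt
  · -- `I` is a single point
    have hI1 : volume (Icc a b) = 0 := by rw [← hab']; simp
    have hJ0 : volume (ψ '' Icc a b) = 0 := by
      rw [← hab', Icc_self, image_singleton]
      exact measure_singleton _
    have hF0 : (fun x => f x - (ψ '' Icc a b).indicator (fun y => f (φ y) * ρ y) x)
        =ᵐ[volume] (0 : ℝ → ℝ) := by
      filter_upwards [measure_eq_zero_iff_ae_notMem.1 hI1, measure_eq_zero_iff_ae_notMem.1 hJ0]
        with x h1 h2
      simp [hsupp x h1, indicator_of_notMem h2]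
    have hVF : volterra (fun x => f x - (ψ '' Icc a b).indicator (fun y => f (φ y) * ρ y) x)
        = fun _ => (0:ℝ) := by
      funext x
      have := intervalIntegral.integral_congr_ae (μ := volume) (a := (0:ℝ)) (b := x)
        (f := fun x => f x - (ψ '' Icc a b).indicator (fun y => f (φ y) * ρ y) x)
        (g := fun _ => (0:ℝ)) (by filter_upwards [hF0] with t ht _ using ht)
      simpa [volterra] using this
    rw [hVF, eLpNorm_zero']
    exact zero_le
  -- main case : a < b
  have hIm : MeasurableSet (Icc a b) := measurableSet_Icc
  have haI : a ∈ Icc a b := ⟨le_refl a, hab⟩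
  have hε₁0 : 0 ≤ ε₁ := le_trans (abs_nonneg _) (hε₁ a haI)
  have hε₂0 : 0 ≤ ε₂ := le_trans (abs_nonneg _) (hε₂ a haI)
  have hM0 : 0 ≤ M := le_trans (abs_nonneg _) (hfb 0)
  have hψc : Continuous ψ := hψdiff.continuous
  have hψ'c : Continuous (deriv ψ) := hψdiff.continuous_deriv le_rfl
  have hψd : ∀ t : ℝ, HasDerivAt ψ (deriv ψ t) t := fun t =>
    (hψdiff.differentiable one_ne_zero t).hasDerivAt
  -- nonnegativity of the derivative on I
  have hψ'0 : ∀ t ∈ Icc a b, 0 ≤ deriv ψ t := by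
    intro t ht
    rcases lt_or_eq_of_le ht.2 with htb | htb
    · have h2 : Filter.Tendsto (slope ψ t) (nhdsWithin t (Ioi t)) (nhds (deriv ψ t)) :=
        (hasDerivAt_iff_tendsto_slope.1 (hψd t)).mono_left
          (nhdsWithin_mono t fun y hy => ne_of_gt hy)
      refine ge_of_tendsto h2 ?_
      filter_upwards [Ioc_mem_nhdsGT_of_mem ⟨le_refl t, htb⟩] with y hy
      rw [slope_def_field]
      apply div_nonneg _ (by linarith [hy.1])
      have : ψ t ≤ ψ y := (hψmono ht ⟨le_trans ht.1 hy.1.le, hy.2⟩ hy.1).le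
      linarith
    · have hat : a < t := by rw [htb]; exact hlt
      have h2 : Filter.Tendsto (slope ψ t) (nhdsWithin t (Iio t)) (nhds (deriv ψ t)) :=
        (hasDerivAt_iff_tendsto_slope.1 (hψd t)).mono_left
          (nhdsWithin_mono t fun y hy => ne_of_lt hy)
      refine ge_of_tendsto h2 ?_
      filter_upwards [Ico_mem_nhdsLT_of_mem ⟨hat, le_refl t⟩] with y hy
      rw [slope_def_field, div_nonneg_iff]
      right
      constructor
      · have : ψ y ≤ ψ t := (hψmono ⟨hy.1, le_trans hy.2.le ht.2⟩ ht hy.2).le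
        linarith
      · linarith [hy.2]
  -- a measurable monotone replacement for the inverse φ
  obtain ⟨χ, hχmono, hχψ⟩ : ∃ χ : ℝ → ℝ, Monotone χ ∧ ∀ t ∈ Icc a b, χ (ψ t) = t := by
    have hSbdd : ∀ y : ℝ, BddAbove ({a} ∪ {t ∈ Icc a b | ψ t ≤ y}) := by
      intro y
      refine ⟨b, ?_⟩
      rintro u (hu | hu)
      · rw [mem_singleton_iff] at hu; rw [hu]; exact hab
      · exact hu.1.2
    refine ⟨fun y => sSup ({a} ∪ {t ∈ Icc a b | ψ t ≤ y}), ?_, ?_⟩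
    · intro y z hyz
      apply csSup_le_csSup (hSbdd z) ⟨a, Or.inl rfl⟩
      rintro u (hu | hu)
      · exact Or.inl hu
      · exact Or.inr ⟨hu.1, le_trans hu.2 hyz⟩
    · intro t ht
      have hset : ({a} ∪ {s ∈ Icc a b | ψ s ≤ ψ t}) = Icc a t := by
        ext u
        constructor
        · rintro (hu | hu)
          · rw [mem_singleton_iff] at hu; rw [hu]; exact ⟨le_refl a, ht.1⟩
          · refine ⟨hu.1.1, ?_⟩
            by_contra hc
            push_neg at hc
            exact absurd (hψmono ht hu.1 hc) (not_lt.2 hu.2)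
        · intro hu
          exact Or.inr ⟨⟨hu.1, le_trans hu.2 ht.2⟩,
            hψmono.monotoneOn ⟨hu.1, le_trans hu.2 ht.2⟩ ht hu.2⟩
      show sSup ({a} ∪ {s ∈ Icc a b | ψ s ≤ ψ t}) = t
      rw [hset]
      exact csSup_Icc ht.1
  have hχmeas : Measurable χ := hχmono.measurable
  have hμIcc : volume (Icc (0:ℝ) 1) < ⊤ := by
    rw [Real.volume_Icc]; exact ENNReal.ofReal_lt_top
  have hfI : Integrable f volume := by
    have hfind : f = (Icc a b).indicator f := by
      funext x
      by_cases hx : x ∈ Icc a b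
      · rw [indicator_of_mem hx]
      · rw [indicator_of_notMem hx, hsupp x hx]
    rw [hfind, integrable_indicator_iff hIm]
    have hconst : IntegrableOn (fun _ => M) (Icc a b) volume :=
      integrableOn_const (lt_of_le_of_lt (measure_mono hIsub) hμIcc).ne
    exact Integrable.mono' hconst hf.aestronglyMeasurable.restrict
      (ae_of_all _ fun x => by rw [Real.norm_eq_abs]; exact hfb x)
  have hJm : MeasurableSet (ψ '' Icc a b) := (isCompact_Icc.image hψc).measurableSet
  have hJsub : ψ '' Icc a b ⊆ Icc (0:ℝ) 1 := image_subset_iff.2 hψmaps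
  have hMρ0 : 0 ≤ Mρ := le_trans (abs_nonneg _) (hρb (ψ a) (mem_image_of_mem ψ haI))
  have hgm : Measurable fun y => f (χ y) * ρ y := (hf.comp hχmeas).mul hρ
  have hIndEq : (ψ '' Icc a b).indicator (fun y => f (φ y) * ρ y)
      = (ψ '' Icc a b).indicator (fun y => f (χ y) * ρ y) := by
    funext y
    by_cases hy : y ∈ ψ '' Icc a b
    · rw [indicator_of_mem hy, indicator_of_mem hy]
      obtain ⟨t, ht, rfl⟩ := hy
      rw [hφ t ht, hχψ t ht]
    · rw [indicator_of_notMem hy, indicator_of_notMem hy]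
  have hIndInt : Integrable ((ψ '' Icc a b).indicator fun y => f (χ y) * ρ y) volume := by
    rw [integrable_indicator_iff hJm]
    have hconst : IntegrableOn (fun _ => M * Mρ) (ψ '' Icc a b) volume :=
      integrableOn_const (lt_of_le_of_lt (measure_mono hJsub) hμIcc).ne
    refine Integrable.mono' hconst hgm.aestronglyMeasurable.restrict ?_
    rw [ae_restrict_iff' hJm]
    refine ae_of_all _ fun y hy => ?_
    rw [Real.norm_eq_abs, abs_mul]
    exact mul_le_mul (hfb _) (hρb y hy) (abs_nonneg _) hM0
  simp only [hIndEq]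
  set S₁ : ℝ → Set ℝ := fun x => Icc a b ∩ Iic x with hS₁def
  set S₂ : ℝ → Set ℝ := fun x => Icc a b ∩ ψ ⁻¹' (Iic x) with hS₂def
  have hS₁m : ∀ x, MeasurableSet (S₁ x) := fun x => hIm.inter measurableSet_Iic
  have hS₂m : ∀ x, MeasurableSet (S₂ x) := fun x =>
    hIm.inter (hψc.measurable measurableSet_Iic)
  have hS₂sub : ∀ x, S₂ x ⊆ Icc a b := fun x => inter_subset_left
  have hS₁sub : ∀ x, S₁ x ⊆ Icc a b := fun x => inter_subset_left
  -- change of variables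
  have hT2 : ∀ x : ℝ, (∫ y in (ψ '' Icc a b) ∩ Iic x, f (χ y) * ρ y)
      = ∫ t in S₂ x, f t * (ρ (ψ t) * deriv ψ t) := by
    intro x
    have himg : ψ '' S₂ x = (ψ '' Icc a b) ∩ Iic x := by
      ext y
      constructor
      · rintro ⟨t, ⟨htI, htx⟩, rfl⟩
        exact ⟨mem_image_of_mem ψ htI, htx⟩
      · rintro ⟨⟨t, htI, rfl⟩, hyx⟩
        exact ⟨t, ⟨htI, hyx⟩, rfl⟩
    rw [← himg, integral_image_eq_integral_abs_deriv_smul (hS₂m x)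
      (fun t _ => (hψd t).hasDerivWithinAt) ((hψmono.mono (hS₂sub x)).injOn)]
    apply setIntegral_congr_fun (hS₂m x)
    intro t ht
    simp only [smul_eq_mul]
    rw [abs_of_nonneg (hψ'0 t (hS₂sub x ht)), hχψ t (hS₂sub x ht)]
    ring
  have hsetae : ∀ (s : Set ℝ), s ⊆ Icc (0:ℝ) 1 →
      ∀ x, (Ioc (0:ℝ) x ∩ s : Set ℝ) =ᵐ[volume] (s ∩ Iic x : Set ℝ) := by
    intro s hs x
    have h1 : s ∩ Iic x = s ∩ Icc 0 x := by
      ext t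
      simp only [mem_inter_iff, mem_Iic, mem_Icc]
      exact ⟨fun h => ⟨h.1, (hs h.1).1, h.2⟩, fun h => ⟨h.1, h.2.2⟩⟩
    rw [h1]
    have h2 : (Ioc (0:ℝ) x : Set ℝ) =ᵐ[volume] (Icc (0:ℝ) x : Set ℝ) := Ioc_ae_eq_Icc
    have h3 := h2.inter (Filter.EventuallyEq.refl _ fun t => t ∈ s)
    rw [inter_comm s (Icc 0 x)]
    exact h3
  have hT1 : ∀ x, (∫ t in Ioc (0:ℝ) x, f t) = ∫ t in S₁ x, f t := by
    intro x
    have e1 : (∫ t in Ioc (0:ℝ) x, f t) = ∫ t in Ioc (0:ℝ) x, (Icc a b).indicator f t :=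
      setIntegral_congr_fun measurableSet_Ioc (fun t _ => by
        by_cases h : t ∈ Icc a b
        · rw [indicator_of_mem h]
        · rw [indicator_of_notMem h, hsupp t h])
    rw [e1, setIntegral_indicator hIm]
    exact setIntegral_congr_set (hsetae _ hIsub x)
  have hT2' : ∀ x, (∫ t in Ioc (0:ℝ) x, ((ψ '' Icc a b).indicator fun y => f (χ y) * ρ y) t)
      = ∫ y in (ψ '' Icc a b) ∩ Iic x, f (χ y) * ρ y := by
    intro x
    rw [setIntegral_indicator hJm]
    exact setIntegral_congr_set (hsetae _ hJsub x)
  -- integrability of the transformed integrand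
  obtain ⟨Mψ, hMψ⟩ : ∃ C, ∀ t ∈ Icc a b, ‖deriv ψ t‖ ≤ C :=
    isCompact_Icc.exists_bound_of_continuousOn hψ'c.continuousOn
  have hprod_meas : Measurable fun t => f t * (ρ (ψ t) * deriv ψ t) :=
    hf.mul ((hρ.comp hψc.measurable).mul hψ'c.measurable)
  have hprodInt : IntegrableOn (fun t => f t * (ρ (ψ t) * deriv ψ t)) (Icc a b) volume := by
    have hconst : IntegrableOn (fun _ => M * (Mρ * Mψ)) (Icc a b) volume :=
      integrableOn_const (lt_of_le_of_lt (measure_mono hIsub) hμIcc).ne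
    refine Integrable.mono' hconst hprod_meas.aestronglyMeasurable.restrict ?_
    rw [ae_restrict_iff' hIm]
    refine ae_of_all _ fun t ht => ?_
    rw [Real.norm_eq_abs, abs_mul, abs_mul]
    have h1 : |ρ (ψ t)| ≤ Mρ := hρb _ (mem_image_of_mem ψ ht)
    have h2 : |deriv ψ t| ≤ Mψ := by rw [← Real.norm_eq_abs]; exact hMψ t ht
    have hMψ0 : 0 ≤ Mψ := le_trans (norm_nonneg _) (hMψ t ht)
    exact mul_le_mul (hfb t) (mul_le_mul h1 h2 (abs_nonneg _) hMρ0)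
      (mul_nonneg (abs_nonneg _) (abs_nonneg _)) hM0
  -- the exceptional set
  set D : ℝ → Set ℝ :=
    fun x => {t | t ∈ Icc a b ∧ ((t ≤ x ∧ x < ψ t) ∨ (ψ t ≤ x ∧ x < t))} with hDdef
  have hDeq : ∀ x, D x = (S₁ x \ S₂ x) ∪ (S₂ x \ S₁ x) := by
    intro x
    ext t
    simp only [hDdef, hS₁def, hS₂def, mem_setOf_eq, mem_union, mem_diff, mem_inter_iff,
      mem_Iic, mem_preimage, not_and, not_le]
    constructor
    · rintro ⟨htI, h | h⟩
      · exact Or.inl ⟨⟨htI, h.1⟩, fun _ => h.2⟩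
      · exact Or.inr ⟨⟨htI, h.1⟩, fun _ => h.2⟩
    · rintro (⟨⟨htI, h1⟩, h2⟩ | ⟨⟨htI, h1⟩, h2⟩)
      · exact ⟨htI, Or.inl ⟨h1, h2 htI⟩⟩
      · exact ⟨htI, Or.inr ⟨h1, h2 htI⟩⟩
  have hDm : ∀ x, MeasurableSet (D x) := by
    intro x
    rw [hDeq]
    exact ((hS₁m x).diff (hS₂m x)).union ((hS₂m x).diff (hS₁m x))
  have hDsub : ∀ x, D x ⊆ Icc a b := fun x t ht => ht.1
  have habs2 : ∀ t ∈ Icc a b, ψ t - t ≤ ε₁ ∧ t - ψ t ≤ ε₁ := by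
    intro t ht
    have h := abs_le.1 (hε₁ t ht)
    constructor <;> linarith [h.1, h.2]
  have hDvol : ∀ x, volume (D x) ≤ ENNReal.ofReal ε₁ := by
    intro x
    by_cases hcase : ∃ t₀, t₀ ∈ Icc a b ∧ t₀ ≤ x ∧ x < ψ t₀
    · obtain ⟨t₀, ht₀I, ht₀x, hxψ⟩ := hcase
      have hsub : D x ⊆ Ioc (x - ε₁) x := by
        rintro t ⟨htI, h | h⟩
        · have := (habs2 t htI).1
          exact ⟨by linarith [h.2], h.1⟩
        · exfalso
          have htt : t₀ < t := lt_of_le_of_lt ht₀x h.2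
          have := hψmono ht₀I htI htt
          linarith [h.1]
      calc volume (D x) ≤ volume (Ioc (x - ε₁) x) := measure_mono hsub
        _ ≤ ENNReal.ofReal ε₁ := by
            rw [Real.volume_Ioc]
            exact ENNReal.ofReal_le_ofReal (by linarith)
    · push_neg at hcase
      have hsub : D x ⊆ Ioc x (x + ε₁) := by
        rintro t ⟨htI, h | h⟩
        · exact absurd h.2 (not_lt.2 (hcase t htI h.1))
        · have := (habs2 t htI).2
          exact ⟨h.2, by linarith [h.1]⟩
      calc volume (D x) ≤ volume (Ioc x (x + ε₁)) := measure_mono hsub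
        _ ≤ ENNReal.ofReal ε₁ := by
            rw [Real.volume_Ioc]
            exact ENNReal.ofReal_le_ofReal (by linarith)
  have hXset : ∀ t, {x | t ∈ D x}
      = if t ∈ Icc a b then (Ico t (ψ t) ∪ Ico (ψ t) t) else (∅ : Set ℝ) := by
    intro t
    by_cases htI : t ∈ Icc a b
    · rw [if_pos htI]
      ext x
      simp only [mem_setOf_eq, hDdef, mem_union, mem_Ico]
      constructor
      · rintro ⟨_, h⟩
        exact h.imp (fun h => ⟨h.1, h.2⟩) (fun h => ⟨h.1, h.2⟩)
      · intro h
        exact ⟨htI, h.imp (fun h => ⟨h.1, h.2⟩) (fun h => ⟨h.1, h.2⟩)⟩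
    · rw [if_neg htI]
      ext x
      simp only [mem_setOf_eq, hDdef, mem_empty_iff_false, iff_false]
      exact fun h => htI h.1
  have hXm : ∀ t, MeasurableSet {x | t ∈ D x} := by
    intro t
    rw [hXset t]
    split_ifs
    · exact measurableSet_Ico.union measurableSet_Ico
    · exact MeasurableSet.empty
  have hXvol : ∀ t, volume {x | t ∈ D x} ≤ ENNReal.ofReal ε₁ := by
    intro t
    rw [hXset t]
    split_ifs with htI
    · refine le_trans (measure_union_le _ _) ?_
      rw [Real.volume_Ico, Real.volume_Ico]
      rcases le_total t (ψ t) with h | h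
      · rw [show ENNReal.ofReal (t - ψ t) = 0 from ENNReal.ofReal_eq_zero.2 (by linarith),
          add_zero]
        exact ENNReal.ofReal_le_ofReal (habs2 t htI).1
      · rw [show ENNReal.ofReal (ψ t - t) = 0 from ENNReal.ofReal_eq_zero.2 (by linarith),
          zero_add]
        exact ENNReal.ofReal_le_ofReal (habs2 t htI).2
    · simp
  -- the kernel set
  set E : Set (ℝ × ℝ) :=
    {q | q.2 ∈ Icc a b ∧ ((q.2 ≤ q.1 ∧ q.1 < ψ q.2) ∨ (ψ q.2 ≤ q.1 ∧ q.1 < q.2))} with hEdef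
  have hED : ∀ x t : ℝ, ((x, t) ∈ E) ↔ t ∈ D x := fun x t => Iff.rfl
  have hEm : MeasurableSet E := by
    have he : E = (Prod.snd ⁻¹' Icc a b) ∩
        (({q : ℝ × ℝ | q.2 ≤ q.1} ∩ {q : ℝ × ℝ | q.1 < ψ q.2}) ∪
         ({q : ℝ × ℝ | ψ q.2 ≤ q.1} ∩ {q : ℝ × ℝ | q.1 < q.2})) := by
      ext q
      simp only [hEdef, mem_setOf_eq, mem_inter_iff, mem_union, mem_preimage]
    rw [he]
    refine (measurable_snd measurableSet_Icc).inter (MeasurableSet.union ?_ ?_)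
    · exact (measurableSet_le measurable_snd measurable_fst).inter
        (measurableSet_lt measurable_fst (hψc.measurable.comp measurable_snd))
    · exact (measurableSet_le (hψc.measurable.comp measurable_snd) measurable_fst).inter
        (measurableSet_lt measurable_fst measurable_snd)
  have hμD : ∀ x, (volume.restrict (Icc (0:ℝ) 1)) {t | (x, t) ∈ E} ≤ ENNReal.ofReal ε₁ := by
    intro x
    have he : {t | (x, t) ∈ E} = D x := rfl
    rw [he, Measure.restrict_apply (hDm x)]
    exact le_trans (measure_mono inter_subset_left) (hDvol x)
  have hμX : ∀ t, (volume.restrict (Icc (0:ℝ) 1)) {x | (x, t) ∈ E} ≤ ENNReal.ofReal ε₁ := by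
    intro t
    have he : {x | (x, t) ∈ E} = {x | t ∈ D x} := rfl
    rw [he, Measure.restrict_apply (hXm t)]
    exact le_trans (measure_mono inter_subset_left) (hXvol t)
  -- pointwise identity for the Volterra integral
  have hVF : ∀ x ∈ Icc (0:ℝ) 1,
      volterra (fun x => f x - (ψ '' Icc a b).indicator (fun y => f (χ y) * ρ y) x) x
        = ((∫ t in S₁ x, f t) - ∫ t in S₂ x, f t)
          + ∫ t in S₂ x, f t * (1 - ρ (ψ t) * deriv ψ t) := by
    intro x hx
    have h3 : (∫ t in S₂ x, f t * (1 - ρ (ψ t) * deriv ψ t))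
        = (∫ t in S₂ x, f t) - ∫ t in S₂ x, f t * (ρ (ψ t) * deriv ψ t) := by
      rw [← integral_sub hfI.integrableOn (hprodInt.mono_set (hS₂sub x))]
      apply setIntegral_congr_fun (hS₂m x)
      intro t _
      ring
    show (∫ t in (0:ℝ)..x, (f t - ((ψ '' Icc a b).indicator fun y => f (χ y) * ρ y) t)) = _
    rw [intervalIntegral.integral_sub hfI.intervalIntegrable hIndInt.intervalIntegrable,
      integral_of_le hx.1, integral_of_le hx.1, hT1 x, hT2' x, hT2 x, h3]
    ring
  -- the two pointwise estimates
  have habsint : ∀ (s : Set ℝ) (g : ℝ → ℝ), |∫ t in s, g t| ≤ ∫ t in s, |g t| := by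
    intro s g
    simpa [Real.norm_eq_abs] using
      norm_integral_le_integral_norm (μ := volume.restrict s) g
  have hLr0 : 0 ≤ ∫ t in Icc (0:ℝ) 1, |f t| :=
    integral_nonneg fun t => abs_nonneg _
  have hfabsInt : IntegrableOn (fun t => |f t|) (Icc (0:ℝ) 1) volume := hfI.integrableOn.abs
  have hA : ∀ x, |∫ t in S₂ x, f t * (1 - ρ (ψ t) * deriv ψ t)|
      ≤ ε₂ * ∫ t in Icc (0:ℝ) 1, |f t| := by
    intro x
    have hfun : (fun t => f t * (1 - ρ (ψ t) * deriv ψ t))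
        = fun t => f t - f t * (ρ (ψ t) * deriv ψ t) := by
      funext t; ring
    have hint1 : IntegrableOn (fun t => f t * (1 - ρ (ψ t) * deriv ψ t)) (S₂ x) volume := by
      rw [hfun]
      exact hfI.integrableOn.sub (hprodInt.mono_set (hS₂sub x))
    calc |∫ t in S₂ x, f t * (1 - ρ (ψ t) * deriv ψ t)|
        ≤ ∫ t in S₂ x, |f t * (1 - ρ (ψ t) * deriv ψ t)| := habsint _ _
      _ ≤ ∫ t in S₂ x, |f t| * ε₂ := by
          apply setIntegral_mono_on hint1.abs (hfI.integrableOn.abs.mul_const ε₂) (hS₂m x)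
          intro t ht
          rw [abs_mul]
          exact mul_le_mul_of_nonneg_left (hε₂ t (hS₂sub x ht)) (abs_nonneg _)
      _ = (∫ t in S₂ x, |f t|) * ε₂ := integral_mul_const ε₂ _
      _ ≤ (∫ t in Icc (0:ℝ) 1, |f t|) * ε₂ := by
          refine mul_le_mul_of_nonneg_right ?_ hε₂0
          exact setIntegral_mono_set hfabsInt (ae_of_all _ fun t => abs_nonneg _)
            (HasSubset.Subset.eventuallyLE ((hS₂sub x).trans hIsub))
      _ = ε₂ * ∫ t in Icc (0:ℝ) 1, |f t| := mul_comm _ _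
  have hB : ∀ x, |(∫ t in S₁ x, f t) - ∫ t in S₂ x, f t| ≤ ∫ t in D x, |f t| := by
    intro x
    have h1 : (∫ t in S₁ x, f t)
        = (∫ t in S₁ x \ S₂ x, f t) + ∫ t in S₁ x ∩ S₂ x, f t := by
      rw [← setIntegral_union (disjoint_sdiff_self_left.mono_right inter_subset_right)
        ((hS₁m x).inter (hS₂m x)) hfI.integrableOn hfI.integrableOn, diff_union_inter]
    have h2 : (∫ t in S₂ x, f t)
        = (∫ t in S₂ x \ S₁ x, f t) + ∫ t in S₂ x ∩ S₁ x, f t := by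
      rw [← setIntegral_union (disjoint_sdiff_self_left.mono_right inter_subset_right)
        ((hS₂m x).inter (hS₁m x)) hfI.integrableOn hfI.integrableOn, diff_union_inter]
    have hDint : (∫ t in D x, |f t|)
        = (∫ t in S₁ x \ S₂ x, |f t|) + ∫ t in S₂ x \ S₁ x, |f t| := by
      rw [hDeq x]
      exact setIntegral_union disjoint_sdiff_sdiff ((hS₂m x).diff (hS₁m x))
        hfI.integrableOn.abs hfI.integrableOn.abs
    rw [h1, h2, inter_comm (S₂ x) (S₁ x), hDint]
    have e0 : (∫ t in S₁ x \ S₂ x, f t) + (∫ t in S₁ x ∩ S₂ x, f t)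
        - ((∫ t in S₂ x \ S₁ x, f t) + ∫ t in S₁ x ∩ S₂ x, f t)
        = (∫ t in S₁ x \ S₂ x, f t) - ∫ t in S₂ x \ S₁ x, f t := by ring
    rw [e0]
    exact le_trans (abs_sub _ _) (add_le_add (habsint _ _) (habsint _ _))
  -- pointwise bound in ℝ≥0∞
  have hkind : ∀ x t : ℝ, E.indicator (1 : ℝ × ℝ → ℝ≥0∞) (x, t) * (‖f t‖₊ : ℝ≥0∞)
      = (D x).indicator (fun t => (‖f t‖₊ : ℝ≥0∞)) t := by
    intro x t
    by_cases h : t ∈ D x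
    · have h' : (x, t) ∈ E := (hED x t).2 h
      simp [h, h']
    · have h' : (x, t) ∉ E := fun hc => h ((hED x t).1 hc)
      simp [h, h']
  have hpoint : ∀ x ∈ Icc (0:ℝ) 1,
      (‖volterra (fun x => f x - (ψ '' Icc a b).indicator (fun y => f (χ y) * ρ y) x) x‖₊ : ℝ≥0∞)
        ≤ ENNReal.ofReal (ε₂ * ∫ t in Icc (0:ℝ) 1, |f t|)
          + ∫⁻ t, E.indicator 1 (x, t) * ‖f t‖₊ ∂(volume.restrict (Icc (0:ℝ) 1)) := by
    intro x hx
    have habs : |volterra (fun x => f x - (ψ '' Icc a b).indicator (fun y => f (χ y) * ρ y) x) x|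
        ≤ (ε₂ * ∫ t in Icc (0:ℝ) 1, |f t|) + ∫ t in D x, |f t| := by
      rw [hVF x hx]
      refine le_trans (abs_add_le _ _) ?_
      rw [add_comm]
      exact add_le_add (hA x) (hB x)
    have e1 : ENNReal.ofReal (∫ t in D x, |f t|) = ∫⁻ t in D x, ‖f t‖₊ ∂volume := by
      simp only [← enorm_eq_nnnorm]
      rw [← ofReal_integral_norm_eq_lintegral_enorm hfI.integrableOn]
      congr 1
    have e2 : (∫⁻ t, E.indicator 1 (x, t) * ‖f t‖₊ ∂(volume.restrict (Icc (0:ℝ) 1)))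
        = ∫⁻ t in D x, (‖f t‖₊ : ℝ≥0∞) ∂volume := by
      calc (∫⁻ t, E.indicator 1 (x, t) * ‖f t‖₊ ∂(volume.restrict (Icc (0:ℝ) 1)))
          = ∫⁻ t, (D x).indicator (fun t => (‖f t‖₊ : ℝ≥0∞)) t
              ∂(volume.restrict (Icc (0:ℝ) 1)) := lintegral_congr fun t => hkind x t
        _ = ∫⁻ t in D x, (‖f t‖₊ : ℝ≥0∞) ∂(volume.restrict (Icc (0:ℝ) 1)) :=
            lintegral_indicator (hDm x) _
        _ = ∫⁻ t in D x, (‖f t‖₊ : ℝ≥0∞) ∂volume := by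
            rw [Measure.restrict_restrict (hDm x),
              inter_eq_self_of_subset_left ((hDsub x).trans hIsub)]
    calc (‖volterra (fun x => f x - (ψ '' Icc a b).indicator (fun y => f (χ y) * ρ y) x) x‖₊ : ℝ≥0∞)
        = ENNReal.ofReal |volterra (fun x => f x - (ψ '' Icc a b).indicator
            (fun y => f (χ y) * ρ y) x) x| := by
          rw [← enorm_eq_nnnorm, ← ofReal_norm, Real.norm_eq_abs]
      _ ≤ ENNReal.ofReal ((ε₂ * ∫ t in Icc (0:ℝ) 1, |f t|) + ∫ t in D x, |f t|) :=
          ENNReal.ofReal_le_ofReal habs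
      _ = ENNReal.ofReal (ε₂ * ∫ t in Icc (0:ℝ) 1, |f t|)
            + ENNReal.ofReal (∫ t in D x, |f t|) :=
          ENNReal.ofReal_add (mul_nonneg hε₂0 hLr0) (integral_nonneg fun t => abs_nonneg _)
      _ = _ := by rw [e1, ← e2]
  have hLrN : ENNReal.ofReal (∫ t in Icc (0:ℝ) 1, |f t|)
      ≤ eLpNorm f p (volume.restrict (Icc (0:ℝ) 1)) := by
    have e1 : ENNReal.ofReal (∫ t in Icc (0:ℝ) 1, |f t|)
        = ∫⁻ t, ‖f t‖₊ ∂(volume.restrict (Icc (0:ℝ) 1)) := by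
      simp only [← enorm_eq_nnnorm]
      rw [← ofReal_integral_norm_eq_lintegral_enorm hfI.integrableOn]
      congr 1
    rw [e1]
    simp only [← enorm_eq_nnnorm]
    rw [← eLpNorm_one_eq_lintegral_enorm]
    exact eLpNorm_le_eLpNorm_of_exponent_le hp hf.aestronglyMeasurable.restrict
  have hH₁m : Measurable fun x =>
      ∫⁻ t, E.indicator 1 (x, t) * ‖f t‖₊ ∂(volume.restrict (Icc (0:ℝ) 1)) := by
    apply Measurable.lintegral_prod_right
      (f := fun x t => E.indicator 1 (x, t) * (‖f t‖₊ : ℝ≥0∞))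
    exact (measurable_one.indicator hEm).mul (hf.nnnorm.coe_nnreal_ennreal.comp measurable_snd)
  have hrhs : ENNReal.ofReal (ε₁ + ε₂) * eLpNorm f p (volume.restrict (Icc (0:ℝ) 1))
      = ENNReal.ofReal ε₂ * eLpNorm f p (volume.restrict (Icc (0:ℝ) 1))
        + ENNReal.ofReal ε₁ * eLpNorm f p (volume.restrict (Icc (0:ℝ) 1)) := by
    rw [ENNReal.ofReal_add hε₁0 hε₂0, add_mul, add_comm]
  rw [hrhs]
  by_cases hptop : p = ⊤
  · subst hptop
    rw [eLpNorm_exponent_top]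
    have hfae : ∀ᵐ t ∂(volume.restrict (Icc (0:ℝ) 1)),
        (‖f t‖₊ : ℝ≥0∞) ≤ eLpNorm f ⊤ (volume.restrict (Icc (0:ℝ) 1)) := by
      rw [eLpNorm_exponent_top]
      exact ae_le_eLpNormEssSup
    have hH : ∀ x, (∫⁻ t, E.indicator 1 (x, t) * ‖f t‖₊ ∂(volume.restrict (Icc (0:ℝ) 1)))
        ≤ ENNReal.ofReal ε₁ * eLpNorm f ⊤ (volume.restrict (Icc (0:ℝ) 1)) := by
      intro x
      calc (∫⁻ t, E.indicator 1 (x, t) * ‖f t‖₊ ∂(volume.restrict (Icc (0:ℝ) 1)))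
          ≤ ∫⁻ t, E.indicator 1 (x, t) * eLpNorm f ⊤ (volume.restrict (Icc (0:ℝ) 1))
              ∂(volume.restrict (Icc (0:ℝ) 1)) := by
            refine lintegral_mono_ae ?_
            filter_upwards [hfae] with t ht
            exact mul_le_mul_right ht _
        _ = eLpNorm f ⊤ (volume.restrict (Icc (0:ℝ) 1))
              * (volume.restrict (Icc (0:ℝ) 1)) {t | (x, t) ∈ E} := by
            have hh : ∀ t, E.indicator (1 : ℝ × ℝ → ℝ≥0∞) (x, t)
                  * eLpNorm f ⊤ (volume.restrict (Icc (0:ℝ) 1))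
                = {t' | (x, t') ∈ E}.indicator
                    (fun _ => eLpNorm f ⊤ (volume.restrict (Icc (0:ℝ) 1))) t := by
              intro t
              by_cases h : (x, t) ∈ E
              · simp [h, Set.indicator_of_mem, mem_setOf_eq]
              · simp [h, Set.indicator_of_notMem, mem_setOf_eq]
            simp only [hh]
            exact lintegral_indicator_const (measurable_prodMk_left hEm) _
        _ ≤ eLpNorm f ⊤ (volume.restrict (Icc (0:ℝ) 1)) * ENNReal.ofReal ε₁ :=
            mul_le_mul_right (hμD x) _
        _ = ENNReal.ofReal ε₁ * eLpNorm f ⊤ (volume.restrict (Icc (0:ℝ) 1)) := mul_comm _ _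
    have hc : ENNReal.ofReal (ε₂ * ∫ t in Icc (0:ℝ) 1, |f t|)
        ≤ ENNReal.ofReal ε₂ * eLpNorm f ⊤ (volume.restrict (Icc (0:ℝ) 1)) := by
      rw [ENNReal.ofReal_mul hε₂0]
      exact mul_le_mul_right hLrN _
    show essSup (fun x => (‖volterra (fun x => f x - (ψ '' Icc a b).indicator
        (fun y => f (χ y) * ρ y) x) x‖₊ : ℝ≥0∞)) (volume.restrict (Icc (0:ℝ) 1)) ≤ _
    refine essSup_le_of_ae_le _ ?_
    filter_upwards [ae_restrict_mem measurableSet_Icc] with x hx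
    exact le_trans (hpoint x hx) (add_le_add hc (hH x))
  · have hp0 : p ≠ 0 := fun h => by rw [h] at hp; exact absurd hp (by norm_num)
    have hr1 : 1 ≤ p.toReal := by
      have := ENNReal.toReal_mono hptop hp
      simpa using this
    have hr0 : (0:ℝ) < p.toReal := lt_of_lt_of_le one_pos hr1
    have hrne : p.toReal ≠ 0 := ne_of_gt hr0
    have hSchur := schur_bound (volume.restrict (Icc (0:ℝ) 1)) hEm (ENNReal.ofReal ε₁)
      hμD hμX hf.nnnorm.coe_nnreal_ennreal hr1
    rw [eLpNorm_eq_lintegral_rpow_enorm_toReal hp0 hptop]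
    calc (∫⁻ x, (‖volterra (fun x => f x - (ψ '' Icc a b).indicator
            (fun y => f (χ y) * ρ y) x) x‖₊ : ℝ≥0∞) ^ p.toReal
          ∂(volume.restrict (Icc (0:ℝ) 1))) ^ (1 / p.toReal)
        ≤ (∫⁻ x, (((fun _ => ENNReal.ofReal (ε₂ * ∫ t in Icc (0:ℝ) 1, |f t|)) + fun x =>
              ∫⁻ t, E.indicator 1 (x, t) * ‖f t‖₊ ∂(volume.restrict (Icc (0:ℝ) 1)))
              : ℝ → ℝ≥0∞) x ^ p.toReal
            ∂(volume.restrict (Icc (0:ℝ) 1))) ^ (1 / p.toReal) := by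
          refine ENNReal.rpow_le_rpow ?_ (by positivity)
          refine lintegral_mono_ae ?_
          filter_upwards [ae_restrict_mem measurableSet_Icc] with x hx
          exact ENNReal.rpow_le_rpow (hpoint x hx) hr0.le
      _ ≤ (∫⁻ x, (fun _ : ℝ => ENNReal.ofReal (ε₂ * ∫ t in Icc (0:ℝ) 1, |f t|)) x ^ p.toReal
              ∂(volume.restrict (Icc (0:ℝ) 1))) ^ (1 / p.toReal)
          + (∫⁻ x, (∫⁻ t, E.indicator 1 (x, t) * ‖f t‖₊
              ∂(volume.restrict (Icc (0:ℝ) 1))) ^ p.toReal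
              ∂(volume.restrict (Icc (0:ℝ) 1))) ^ (1 / p.toReal) :=
          ENNReal.lintegral_Lp_add_le measurable_const.aemeasurable hH₁m.aemeasurable hr1
      _ ≤ ENNReal.ofReal ε₂ * eLpNorm f p (volume.restrict (Icc (0:ℝ) 1))
          + ENNReal.ofReal ε₁ * eLpNorm f p (volume.restrict (Icc (0:ℝ) 1)) := by
          refine add_le_add ?_ ?_
          · have hgoal : (∫⁻ _ : ℝ, ENNReal.ofReal (ε₂ * ∫ t in Icc (0:ℝ) 1, |f t|) ^ p.toReal
                ∂(volume.restrict (Icc (0:ℝ) 1))) ^ (1 / p.toReal)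
                ≤ ENNReal.ofReal ε₂ * eLpNorm f p (volume.restrict (Icc (0:ℝ) 1)) := by
              rw [lintegral_const, measure_univ, mul_one, ← ENNReal.rpow_mul,
                mul_one_div, div_self hrne, ENNReal.rpow_one, ENNReal.ofReal_mul hε₂0]
              exact mul_le_mul_right hLrN _
            exact hgoal
          · refine le_trans (ENNReal.rpow_le_rpow hSchur (by positivity)) ?_
            rw [ENNReal.mul_rpow_of_nonneg _ _ (by positivity), ← ENNReal.rpow_mul,
              mul_one_div, div_self hrne, ENNReal.rpow_one,
              eLpNorm_eq_lintegral_rpow_enorm_toReal hp0 hptop]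
            exact le_rfl
end

section
/- Let f : [0,1] → ℝ be bounded and measurable, supported in a subinterval I ⊂ [0,1]. Let ε > 0 be such that J = {x + ε : x ∈ I} ⊂ [0,1], and define f_ε(x) = f(x - ε) for x ∈ J and 0 otherwise. Then for all p ∈ [1,∞], ‖V(f - f_ε)‖_p ≤ ε‖f‖_p, where (Vg)(x) = ∫₀ˣ g(t)dt. -/
open MeasureTheory Set intervalIntegral
open scoped ENNReal NNReal

-- Helper: power-mean / Hoelder consequence
lemma lintegral_pow_le_aux (μ : Measure ℝ) (g : ℝ → ℝ≥0∞) (hg : Measurable g)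
    (pr : ℝ) (hpr : 1 ≤ pr) :
    (∫⁻ t, g t ∂μ) ^ pr ≤ (μ Set.univ) ^ (pr - 1) * ∫⁻ t, (g t) ^ pr ∂μ := by
  rcases eq_or_lt_of_le hpr with h1 | h1
  · simp [← h1]
  · have hpq : Real.HolderConjugate pr pr.conjExponent := Real.HolderConjugate.conjExponent h1
    have hpos : 0 < pr := lt_trans one_pos h1
    have H := ENNReal.lintegral_mul_le_Lp_mul_Lq μ hpq hg.aemeasurable
      (aemeasurable_const (b := (1 : ℝ≥0∞)))
    simp only [Pi.mul_apply, mul_one, ENNReal.one_rpow, lintegral_one] at H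
    have H2 := ENNReal.rpow_le_rpow H hpos.le
    calc (∫⁻ t, g t ∂μ) ^ pr
        ≤ ((∫⁻ a, g a ^ pr ∂μ) ^ (1 / pr) * μ Set.univ ^ (1 / pr.conjExponent)) ^ pr := H2
      _ = (μ Set.univ) ^ (pr - 1) * ∫⁻ t, (g t) ^ pr ∂μ := by
          rw [ENNReal.mul_rpow_of_nonneg _ _ hpos.le, ← ENNReal.rpow_mul, ← ENNReal.rpow_mul,
            one_div_mul_cancel hpos.ne', ENNReal.rpow_one, mul_comm]
          congr 1
          rw [Real.conjExponent]
          field_simp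

/-- Corollary (shifts): if `f` is bounded measurable, supported in a subinterval `I` of
`[0,1]`, `ε > 0`, the shifted interval `J = I + ε` is contained in `[0,1]`, and `f_ε` is
the shift of `f` by `ε`, then `‖V(f - f_ε)‖_p ≤ ε ‖f‖_p` for all `p ∈ [1,∞]`. -/
theorem volterra_shift (p : ℝ≥0∞) (hp : 1 ≤ p)
    (I : Set ℝ) (a b : ℝ) (hI : I = Icc a b) (hIsub : I ⊆ Icc (0:ℝ) 1)
    (f : ℝ → ℝ) (hf : Measurable f) (M : ℝ) (hfb : ∀ x, |f x| ≤ M)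
    (hsupp : ∀ x ∉ I, f x = 0)
    (ε : ℝ) (hε : 0 < ε) (hJ : (fun x => x + ε) '' I ⊆ Icc (0:ℝ) 1) :
    eLpNorm (volterra (fun x => f x - ((fun x => x + ε) '' I).indicator (fun y => f (y - ε)) x))
        p (volume.restrict (Icc (0:ℝ) 1))
      ≤ ENNReal.ofReal ε * eLpNorm f p (volume.restrict (Icc (0:ℝ) 1)) := by
  set J : Set ℝ := (fun x => x + ε) '' I with hJdef
  set g : ℝ → ℝ := fun x => f x - J.indicator (fun y => f (y - ε)) x with hg
  -- the indicator is redundant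
  have hind : ∀ y, J.indicator (fun y => f (y - ε)) y = f (y - ε) := by
    intro y
    by_cases hy : y ∈ J
    · exact indicator_of_mem hy _
    · rw [indicator_of_notMem hy]
      refine (hsupp _ fun hmem => hy ?_).symm
      exact ⟨y - ε, hmem, by ring⟩
  -- f vanishes outside [0,1]
  have hzero : ∀ t, t ∉ Icc (0:ℝ) 1 → f t = 0 := fun t ht => hsupp t (fun h => ht (hIsub h))
  -- f is integrable
  have hfi : Integrable f volume := by
    have : f = (Icc (0:ℝ) 1).indicator f := by
      funext t
      by_cases ht : t ∈ Icc (0:ℝ) 1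
      · rw [indicator_of_mem ht]
      · rw [indicator_of_notMem ht, hzero t ht]
    rw [this, integrable_indicator_iff measurableSet_Icc]
    exact Measure.integrableOn_of_bounded (by simp) hf.aestronglyMeasurable
      (Filter.Eventually.of_forall fun x => by simpa [Real.norm_eq_abs] using hfb x)
  have hint : ∀ u v : ℝ, IntervalIntegrable f volume u v := fun u v =>
    hfi.intervalIntegrable
  -- key pointwise identity
  have hkey : ∀ x : ℝ, volterra g x = ∫ t in (x - ε)..x, f t := by
    intro x
    have h1 : volterra g x = (∫ t in (0:ℝ)..x, f t) - ∫ t in (0:ℝ)..x, f (t - ε) := by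
      rw [volterra]
      rw [show (fun t => g t) = fun t => f t - f (t - ε) by funext t; rw [hg]; simp [hind t]]
      exact intervalIntegral.integral_sub (hint 0 x) (hfi.comp_sub_right ε).intervalIntegrable
    have h2 : (∫ t in (0:ℝ)..x, f (t - ε)) = ∫ t in (-ε)..(x - ε), f t := by
      rw [intervalIntegral.integral_comp_sub_right f ε]
      norm_num
    have h3 : (∫ t in (-ε)..(0:ℝ), f t) = 0 := by
      rw [intervalIntegral.integral_of_le (by linarith)]
      refine setIntegral_eq_zero_of_ae_eq_zero ?_
      have h0 : (volume : Measure ℝ) {(0:ℝ)} = 0 := Real.volume_singleton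
      filter_upwards [measure_eq_zero_iff_ae_notMem.mp h0] with t ht0 ht
      refine hzero t fun hmem => ht0 ?_
      have : t = 0 := le_antisymm ht.2 hmem.1
      simp [this]
    have h4 : (∫ t in (-ε)..(x - ε), f t) = (∫ t in (-ε)..(0:ℝ), f t) + ∫ t in (0:ℝ)..(x-ε), f t :=
      (intervalIntegral.integral_add_adjacent_intervals (hint _ _) (hint _ _)).symm
    have h5 : (∫ t in (0:ℝ)..(x-ε), f t) + ∫ t in (x-ε)..x, f t = ∫ t in (0:ℝ)..x, f t :=
      intervalIntegral.integral_add_adjacent_intervals (hint _ _) (hint _ _)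
    rw [h1, h2, h4, h3, zero_add]
    linarith [h5]
  -- pointwise enorm bound
  have hpt : ∀ x : ℝ, (‖volterra g x‖₊ : ℝ≥0∞) ≤ ∫⁻ t in Ioc (x - ε) x, (‖f t‖₊ : ℝ≥0∞) ∂volume := by
    intro x
    rw [hkey x, intervalIntegral.integral_of_le (by linarith)]
    exact enorm_integral_le_lintegral_enorm _
  by_cases hptop : p = ∞
  · subst hptop
    rw [eLpNorm_exponent_top, eLpNorm_exponent_top]
    set D := eLpNormEssSup f (volume.restrict (Icc (0:ℝ) 1)) with hD
    have hDae : ∀ᵐ t ∂(volume : Measure ℝ), (‖f t‖₊ : ℝ≥0∞) ≤ D := by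
      have h1 : ∀ᵐ t ∂(volume.restrict (Icc (0:ℝ) 1)), (‖f t‖₊ : ℝ≥0∞) ≤ D :=
        ae_le_eLpNormEssSup
      rw [ae_restrict_iff' measurableSet_Icc] at h1
      filter_upwards [h1] with t ht
      by_cases hmem : t ∈ Icc (0:ℝ) 1
      · exact ht hmem
      · simp [hzero t hmem]
    have hbd : ∀ x : ℝ, (‖volterra g x‖₊ : ℝ≥0∞) ≤ ENNReal.ofReal ε * D := by
      intro x
      refine (hpt x).trans ?_
      calc ∫⁻ t in Ioc (x - ε) x, (‖f t‖₊ : ℝ≥0∞) ∂volume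
          ≤ ∫⁻ _ in Ioc (x - ε) x, D ∂volume :=
            lintegral_mono_ae (ae_restrict_of_ae hDae)
        _ = D * volume (Ioc (x - ε) x) := setLIntegral_const _ _
        _ = ENNReal.ofReal ε * D := by
            rw [Real.volume_Ioc, mul_comm]
            congr 2
            ring
    rw [eLpNormEssSup]
    exact essSup_le_of_ae_le _ (Filter.Eventually.of_forall fun x => hbd x)
  · have hp0 : p ≠ 0 := fun h => by simp [h] at hp
    set pr := p.toReal with hprdef
    have hpr1 : 1 ≤ pr := by
      rw [hprdef, ← ENNReal.toReal_one]
      exact ENNReal.toReal_mono hptop hp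
    have hpr0 : 0 < pr := lt_of_lt_of_le one_pos hpr1
    rw [eLpNorm_eq_lintegral_rpow_enorm_toReal hp0 hptop, eLpNorm_eq_lintegral_rpow_enorm_toReal hp0 hptop]
    set C := ENNReal.ofReal ε with hC
    have hC0 : C ≠ 0 := by simp [hC, hε]
    have hCtop : C ≠ ∞ := ENNReal.ofReal_ne_top
    set h : ℝ → ℝ≥0∞ := fun t => (‖f t‖₊ : ℝ≥0∞) ^ pr with hh
    have hhm : Measurable h := (hf.nnnorm.coe_nnreal_ennreal).pow_const pr
    suffices hsuf : (∫⁻ x in Icc (0:ℝ) 1, (‖volterra g x‖₊ : ℝ≥0∞) ^ pr ∂volume)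
        ≤ C ^ pr * ∫⁻ t in Icc (0:ℝ) 1, h t ∂volume by
      calc (∫⁻ x in Icc (0:ℝ) 1, (‖volterra g x‖₊ : ℝ≥0∞) ^ p.toReal ∂volume) ^ (1 / p.toReal)
          ≤ (C ^ pr * ∫⁻ t in Icc (0:ℝ) 1, h t ∂volume) ^ (1 / pr) :=
            ENNReal.rpow_le_rpow hsuf (by positivity)
        _ = C * (∫⁻ t in Icc (0:ℝ) 1, h t ∂volume) ^ (1 / pr) := by
            rw [ENNReal.mul_rpow_of_nonneg _ _ (by positivity), ← ENNReal.rpow_mul,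
              mul_one_div_cancel hpr0.ne', ENNReal.rpow_one]
        _ = C * (∫⁻ t in Icc (0:ℝ) 1, (‖f t‖₊ : ℝ≥0∞) ^ p.toReal ∂volume) ^ (1 / p.toReal) := rfl
    -- pointwise Hoelder bound
    have hHolder : ∀ x : ℝ, (‖volterra g x‖₊ : ℝ≥0∞) ^ pr
        ≤ C ^ (pr - 1) * ∫⁻ t in Ioc (x - ε) x, h t ∂volume := by
      intro x
      refine (ENNReal.rpow_le_rpow (hpt x) hpr0.le).trans ?_
      have h2 := lintegral_pow_le_aux (volume.restrict (Ioc (x - ε) x))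
        (fun t => (‖f t‖₊ : ℝ≥0∞)) hf.nnnorm.coe_nnreal_ennreal pr hpr1
      simpa [Measure.restrict_apply_univ, Real.volume_Ioc,
        show x - (x - ε) = ε by ring] using h2
    -- swap the double integral
    have hswap : (∫⁻ x in Icc (0:ℝ) 1, ∫⁻ t in Ioc (x - ε) x, h t ∂volume ∂volume)
        ≤ C * ∫⁻ t in Icc (0:ℝ) 1, h t ∂volume := by
      have e1 : ∀ x : ℝ, (∫⁻ t in Ioc (x - ε) x, h t ∂volume)
          = ∫⁻ t, (Ioc (x - ε) x).indicator h t ∂volume := fun x =>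
        (lintegral_indicator measurableSet_Ioc h).symm
      have hFm : AEMeasurable (Function.uncurry fun x t => (Ioc (x - ε) x).indicator h t)
          ((volume.restrict (Icc (0:ℝ) 1)).prod volume) := by
        have : (Function.uncurry fun x t => (Ioc (x - ε) x).indicator h t)
            = ({q : ℝ × ℝ | q.1 - ε < q.2 ∧ q.2 ≤ q.1}).indicator (fun q => h q.2) := by
          funext q
          simp [Function.uncurry, Set.indicator_apply, Set.mem_Ioc, Set.mem_setOf_eq]
        rw [this]
        exact ((hhm.comp measurable_snd).indicator
          ((measurableSet_lt (measurable_fst.sub measurable_const) measurable_snd).inter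
            (measurableSet_le measurable_snd measurable_fst))).aemeasurable
      calc (∫⁻ x in Icc (0:ℝ) 1, ∫⁻ t in Ioc (x - ε) x, h t ∂volume ∂volume)
          = ∫⁻ x in Icc (0:ℝ) 1, ∫⁻ t, (Ioc (x - ε) x).indicator h t ∂volume ∂volume := by
            simp_rw [e1]
        _ = ∫⁻ t, ∫⁻ x in Icc (0:ℝ) 1, (Ioc (x - ε) x).indicator h t ∂volume ∂volume :=
            lintegral_lintegral_swap hFm
        _ ≤ ∫⁻ t, C * h t ∂volume := by
            refine lintegral_mono fun t => ?_
            have e2 : ∀ x : ℝ, (Ioc (x - ε) x).indicator h t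
                = (Ico t (t + ε)).indicator (fun _ => h t) x := by
              intro x
              simp only [Set.indicator_apply, Set.mem_Ioc, Set.mem_Ico]
              refine if_congr ?_ rfl rfl
              constructor
              · rintro ⟨h1, h2⟩; exact ⟨h2, by linarith⟩
              · rintro ⟨h1, h2⟩; exact ⟨by linarith, h1⟩
            calc (∫⁻ x in Icc (0:ℝ) 1, (Ioc (x - ε) x).indicator h t ∂volume)
                = ∫⁻ x in Icc (0:ℝ) 1, (Ico t (t + ε)).indicator (fun _ => h t) x ∂volume := by
                  simp_rw [e2]
              _ = h t * (volume.restrict (Icc (0:ℝ) 1)) (Ico t (t + ε)) := by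
                  rw [lintegral_indicator measurableSet_Ico, setLIntegral_const]
              _ ≤ h t * C := by
                  refine mul_le_mul_right ?_ _
                  rw [Measure.restrict_apply measurableSet_Ico]
                  refine (measure_mono inter_subset_left).trans ?_
                  rw [Real.volume_Ico]
                  simp [hC]
              _ = C * h t := mul_comm _ _
        _ = C * ∫⁻ t, h t ∂volume := lintegral_const_mul C hhm
        _ = C * ∫⁻ t in Icc (0:ℝ) 1, h t ∂volume := by
            congr 1
            rw [← lintegral_indicator measurableSet_Icc]
            refine lintegral_congr fun t => ?_
            by_cases hmem : t ∈ Icc (0:ℝ) 1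
            · rw [indicator_of_mem hmem]
            · rw [indicator_of_notMem hmem, hh]
              simp only [hzero t hmem, nnnorm_zero, ENNReal.coe_zero]
              exact ENNReal.zero_rpow_of_pos hpr0
    have hCC : C ^ (pr - 1) * C = C ^ pr := by
      nth_rewrite 2 [← ENNReal.rpow_one C]
      rw [← ENNReal.rpow_add _ _ hC0 hCtop]
      ring_nf
    calc (∫⁻ x in Icc (0:ℝ) 1, (‖volterra g x‖₊ : ℝ≥0∞) ^ pr ∂volume)
        ≤ ∫⁻ x in Icc (0:ℝ) 1, C ^ (pr - 1) * ∫⁻ t in Ioc (x - ε) x, h t ∂volume ∂volume :=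
          lintegral_mono fun x => hHolder x
      _ = C ^ (pr - 1) * ∫⁻ x in Icc (0:ℝ) 1, ∫⁻ t in Ioc (x - ε) x, h t ∂volume ∂volume :=
          lintegral_const_mul' _ _ (ENNReal.rpow_ne_top_of_nonneg (by linarith) hCtop)
      _ ≤ C ^ (pr - 1) * (C * ∫⁻ t in Icc (0:ℝ) 1, h t ∂volume) := mul_le_mul_right hswap _
      _ = C ^ pr * ∫⁻ t in Icc (0:ℝ) 1, h t ∂volume := by rw [← mul_assoc, hCC]
end

section
/- Let F : ℝ² → ℝ be supported on the disc D of radius 1/2 centered at the origin, and for an angle θ define f_θ(x) = ∫_{-1/2}^{1/2} F(cos(θ)x + sin(θ)y, cos(θ)y - sin(θ)x) dy. Then for all angles θ, φ with |θ - φ| ≤ π/4 and all p ∈ [1,∞], ‖V(f_θ - f_φ)‖_p ≤ ‖F‖_p · sqrt((1 - cos(θ - φ))/2), where ‖F‖_p is the L^p norm of F over D and V is the Volterra operator on [-1/2,1/2]. -/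
open MeasureTheory Set intervalIntegral Real
open scoped ENNReal NNReal

/-- The Volterra operator on `[-1/2, 1/2]`. -/
noncomputable def volterraHalf (f : ℝ → ℝ) (x : ℝ) : ℝ := ∫ t in (-(1:ℝ)/2)..x, f t

/-- The projection (parallel-beam Radon transform) of `F` at angle `θ`. -/
noncomputable def proj (F : ℝ → ℝ → ℝ) (θ : ℝ) (x : ℝ) : ℝ :=
  ∫ y in (-(1:ℝ)/2)..(1/2), F (Real.cos θ * x + Real.sin θ * y) (Real.cos θ * y - Real.sin θ * x)




noncomputable def rotLM (c s : ℝ) : (ℝ × ℝ) →ₗ[ℝ] (ℝ × ℝ) :=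
  LinearMap.prod (c • LinearMap.fst ℝ ℝ ℝ - s • LinearMap.snd ℝ ℝ ℝ)
    (s • LinearMap.fst ℝ ℝ ℝ + c • LinearMap.snd ℝ ℝ ℝ)

lemma rotLM_det (c s : ℝ) : LinearMap.det (rotLM c s) = c^2 + s^2 := by
  rw [← LinearMap.det_toMatrix (Module.Basis.finTwoProd ℝ), Matrix.det_fin_two]
  simp [LinearMap.toMatrix_apply, rotLM, Module.Basis.finTwoProd]
  ring

lemma rot_mp (c s : ℝ) (h : c^2 + s^2 = 1) :
    MeasurePreserving (fun w : ℝ × ℝ => (c * w.1 - s * w.2, s * w.1 + c * w.2))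
      volume volume := by
  have hdet : LinearMap.det (rotLM c s) ≠ 0 := by rw [rotLM_det, h]; norm_num
  constructor
  · exact ((rotLM c s).continuous_of_finiteDimensional).measurable
  · have := MeasureTheory.Measure.map_linearMap_addHaar_eq_smul_addHaar
      (volume : Measure (ℝ × ℝ)) hdet
    rw [rotLM_det, h] at this
    simpa [rotLM, LinearMap.prod, Function.prod_def] using this

lemma line_null_fst (c s k : ℝ) (h : c^2 + s^2 = 1) :
    volume {w : ℝ × ℝ | c * w.1 - s * w.2 = k} = 0 := by
  have hmp := rot_mp c s h
  have hset : {w : ℝ × ℝ | c * w.1 - s * w.2 = k}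
      = (fun w : ℝ × ℝ => (c * w.1 - s * w.2, s * w.1 + c * w.2)) ⁻¹' ({k} ×ˢ univ) := by
    ext w; simp [eq_comm]
  rw [hset, hmp.measure_preimage
    (((measurableSet_singleton k).prod MeasurableSet.univ).nullMeasurableSet)]
  rw [MeasureTheory.Measure.volume_eq_prod ℝ ℝ, MeasureTheory.Measure.prod_prod]
  simp

lemma line_null_snd (c s k : ℝ) (h : c^2 + s^2 = 1) :
    volume {w : ℝ × ℝ | s * w.1 + c * w.2 = k} = 0 := by
  have hmp := rot_mp c s h
  have hset : {w : ℝ × ℝ | s * w.1 + c * w.2 = k}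
      = (fun w : ℝ × ℝ => (c * w.1 - s * w.2, s * w.1 + c * w.2)) ⁻¹' (univ ×ˢ {k}) := by
    ext w; simp [eq_comm]
  rw [hset, hmp.measure_preimage
    ((MeasurableSet.univ.prod (measurableSet_singleton k)).nullMeasurableSet)]
  rw [MeasureTheory.Measure.volume_eq_prod ℝ ℝ, MeasureTheory.Measure.prod_prod]
  simp

noncomputable def kern (θ φ x : ℝ) (w : ℝ × ℝ) : ℝ :=
  (if Real.cos θ * w.1 - Real.sin θ * w.2 ≤ x then (1:ℝ) else 0)
  - (if Real.cos φ * w.1 - Real.sin φ * w.2 ≤ x then (1:ℝ) else 0)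

lemma kern_measurable (θ φ : ℝ) : Measurable fun p : ℝ × (ℝ × ℝ) => kern θ φ p.1 p.2 := by
  have h : ∀ ψ : ℝ, Measurable fun p : ℝ × (ℝ × ℝ) =>
      (if Real.cos ψ * p.2.1 - Real.sin ψ * p.2.2 ≤ p.1 then (1:ℝ) else 0) := by
    intro ψ
    have hS : MeasurableSet {p : ℝ × (ℝ × ℝ) | Real.cos ψ * p.2.1 - Real.sin ψ * p.2.2 ≤ p.1} :=
      measurableSet_le (((measurable_snd.fst).const_mul _).sub ((measurable_snd.snd).const_mul _))
        measurable_fst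
    exact Measurable.ite hS measurable_const measurable_const
  exact (h θ).sub (h φ)

lemma kern_abs_le (θ φ x : ℝ) (w : ℝ × ℝ) : |kern θ φ x w| ≤ 1 := by
  rw [kern]
  by_cases c1 : Real.cos θ * w.1 - Real.sin θ * w.2 ≤ x <;>
    by_cases c2 : Real.cos φ * w.1 - Real.sin φ * w.2 ≤ x <;>
    simp only [c1, c2, if_true, if_false] <;> norm_num

lemma kern_enorm_le_one (θ φ x : ℝ) (w : ℝ × ℝ) : (‖kern θ φ x w‖₊ : ℝ≥0∞) ≤ 1 := by
  rw [show (‖kern θ φ x w‖₊ : ℝ≥0∞) = ‖kern θ φ x w‖ₑ from rfl, Real.enorm_eq_ofReal_abs, ← ENNReal.ofReal_one]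
  exact ENNReal.ofReal_le_ofReal (kern_abs_le θ φ x w)

lemma kern_between (θ φ x : ℝ) (w : ℝ × ℝ) (h : kern θ φ x w ≠ 0) :
    min (Real.cos θ * w.1 - Real.sin θ * w.2) (Real.cos φ * w.1 - Real.sin φ * w.2) ≤ x
    ∧ x ≤ max (Real.cos θ * w.1 - Real.sin θ * w.2) (Real.cos φ * w.1 - Real.sin φ * w.2) := by
  rw [kern] at h
  by_cases c1 : Real.cos θ * w.1 - Real.sin θ * w.2 ≤ x <;>
    by_cases c2 : Real.cos φ * w.1 - Real.sin φ * w.2 ≤ x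
  · simp [c1, c2] at h
  · push_neg at c2
    exact ⟨(min_le_left _ _).trans c1, le_max_of_le_right c2.le⟩
  · push_neg at c1
    exact ⟨(min_le_right _ _).trans c2, le_max_of_le_left c1.le⟩
  · simp [c1, c2] at h

lemma trig_sum' (A B : ℝ) (w : ℝ × ℝ) :
    (Real.cos (A+B) * w.1 - Real.sin (A+B) * w.2) + (Real.cos (A-B) * w.1 - Real.sin (A-B) * w.2)
      = 2 * Real.cos B * (Real.cos A * w.1 - Real.sin A * w.2) := by
  rw [Real.cos_add, Real.cos_sub, Real.sin_add, Real.sin_sub]; ring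

lemma trig_diff' (A B : ℝ) (w : ℝ × ℝ) :
    (Real.cos (A+B) * w.1 - Real.sin (A+B) * w.2) - (Real.cos (A-B) * w.1 - Real.sin (A-B) * w.2)
      = -2 * Real.sin B * (Real.sin A * w.1 + Real.cos A * w.2) := by
  rw [Real.cos_add, Real.cos_sub, Real.sin_add, Real.sin_sub]; ring

lemma trig_sum (θ φ : ℝ) (w : ℝ × ℝ) :
    (Real.cos θ * w.1 - Real.sin θ * w.2) + (Real.cos φ * w.1 - Real.sin φ * w.2)
      = 2 * Real.cos ((θ-φ)/2) * (Real.cos ((θ+φ)/2) * w.1 - Real.sin ((θ+φ)/2) * w.2) := by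
  have h := trig_sum' ((θ+φ)/2) ((θ-φ)/2) w
  rw [show (θ+φ)/2 + (θ-φ)/2 = θ by ring, show (θ+φ)/2 - (θ-φ)/2 = φ by ring] at h
  exact h

lemma trig_diff (θ φ : ℝ) (w : ℝ × ℝ) :
    (Real.cos θ * w.1 - Real.sin θ * w.2) - (Real.cos φ * w.1 - Real.sin φ * w.2)
      = -2 * Real.sin ((θ-φ)/2) * (Real.sin ((θ+φ)/2) * w.1 + Real.cos ((θ+φ)/2) * w.2) := by
  have h := trig_diff' ((θ+φ)/2) ((θ-φ)/2) w
  rw [show (θ+φ)/2 + (θ-φ)/2 = θ by ring, show (θ+φ)/2 - (θ-φ)/2 = φ by ring] at h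
  exact h

lemma v_abs_le (ψ : ℝ) (w : ℝ × ℝ) (hw : w.1 ^ 2 + w.2 ^ 2 ≤ 1/4) :
    |Real.sin ψ * w.1 + Real.cos ψ * w.2| ≤ 1/2 := by
  have h1 := Real.sin_sq_add_cos_sq ψ
  have h2 := sq_nonneg (Real.cos ψ * w.1 - Real.sin ψ * w.2)
  apply abs_le.mpr
  constructor <;> nlinarith [sq_nonneg (Real.sin ψ * w.1 + Real.cos ψ * w.2 + 1/2),
    sq_nonneg (Real.sin ψ * w.1 + Real.cos ψ * w.2 - 1/2)]

lemma kern_lint_x_le (θ φ : ℝ) (w : ℝ × ℝ) (hw : w.1 ^ 2 + w.2 ^ 2 ≤ 1/4) :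
    ∫⁻ x in Icc (-(1:ℝ)/2) (1/2), (‖kern θ φ x w‖₊ : ℝ≥0∞)
      ≤ ENNReal.ofReal |Real.sin ((θ-φ)/2)| := by
  have hptw : ∀ x : ℝ, (‖kern θ φ x w‖₊ : ℝ≥0∞)
      ≤ (Icc (min (Real.cos θ * w.1 - Real.sin θ * w.2) (Real.cos φ * w.1 - Real.sin φ * w.2))
          (max (Real.cos θ * w.1 - Real.sin θ * w.2) (Real.cos φ * w.1 - Real.sin φ * w.2))
          ).indicator (fun _ => 1) x := by
    intro x
    by_cases h0 : kern θ φ x w = 0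
    · simp [h0]
    · have hb := kern_between θ φ x w h0
      rw [indicator_of_mem (mem_Icc.mpr hb)]
      exact kern_enorm_le_one θ φ x w
  calc ∫⁻ x in Icc (-(1:ℝ)/2) (1/2), (‖kern θ φ x w‖₊ : ℝ≥0∞)
      ≤ ∫⁻ x in Icc (-(1:ℝ)/2) (1/2), (Icc (min _ _) (max _ _)).indicator (fun _ => 1) x :=
        lintegral_mono hptw
    _ = (volume.restrict (Icc (-(1:ℝ)/2) (1/2))) (Icc (min _ _) (max _ _)) :=
        lintegral_indicator_one measurableSet_Icc
    _ ≤ volume (Icc (min _ _) (max _ _)) := by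
        rw [Measure.restrict_apply measurableSet_Icc]
        exact measure_mono inter_subset_left
    _ = ENNReal.ofReal (max _ _ - min _ _) := Real.volume_Icc
    _ ≤ ENNReal.ofReal |Real.sin ((θ-φ)/2)| := by
        rw [max_sub_min_eq_abs]
        apply ENNReal.ofReal_le_ofReal
        rw [abs_sub_comm, trig_diff θ φ w]
        have hv := v_abs_le ((θ+φ)/2) w hw
        calc |(-2) * Real.sin ((θ-φ)/2) * (Real.sin ((θ+φ)/2) * w.1 + Real.cos ((θ+φ)/2) * w.2)|
            = 2 * |Real.sin ((θ-φ)/2)| * |Real.sin ((θ+φ)/2) * w.1 + Real.cos ((θ+φ)/2) * w.2| := by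
              rw [abs_mul, abs_mul]; norm_num
          _ ≤ 2 * |Real.sin ((θ-φ)/2)| * (1/2) := by
              apply mul_le_mul_of_nonneg_left hv (by positivity)
          _ = |Real.sin ((θ-φ)/2)| := by ring

lemma integral_abs_Icc : ∫ v in Icc (-(1:ℝ)/2) (1/2 : ℝ), |v| = 1/4 := by
  rw [MeasureTheory.integral_Icc_eq_integral_Ioc,
      ← intervalIntegral.integral_of_le (by norm_num : (-(1:ℝ)/2) ≤ 1/2)]
  have h1 : IntervalIntegrable (fun v : ℝ => |v|) volume (-(1:ℝ)/2) 0 :=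
    continuous_abs.intervalIntegrable _ _
  have h2 : IntervalIntegrable (fun v : ℝ => |v|) volume 0 (1/2 : ℝ) :=
    continuous_abs.intervalIntegrable _ _
  rw [← intervalIntegral.integral_add_adjacent_intervals h1 h2]
  have e1 : ∫ v in (-(1:ℝ)/2)..(0:ℝ), |v| = ∫ v in (-(1:ℝ)/2)..(0:ℝ), -v := by
    apply intervalIntegral.integral_congr
    intro v hv
    rw [Set.uIcc_of_le (by norm_num : (-(1:ℝ)/2) ≤ 0)] at hv
    exact abs_of_nonpos hv.2
  have e2 : ∫ v in (0:ℝ)..(1/2 : ℝ), |v| = ∫ v in (0:ℝ)..(1/2 : ℝ), v := by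
    apply intervalIntegral.integral_congr
    intro v hv
    rw [Set.uIcc_of_le (by norm_num : (0:ℝ) ≤ 1/2)] at hv
    exact abs_of_nonneg hv.1
  rw [e1, e2, intervalIntegral.integral_neg, integral_id, integral_id]
  norm_num

lemma cos_half_diff_ge (θ φ : ℝ) (hθφ : |θ - φ| ≤ π/4) : (1:ℝ)/2 ≤ Real.cos ((θ-φ)/2) := by
  have hpi := Real.pi_pos
  have h8 : |(θ-φ)/2| ≤ π/8 := by
    rw [abs_div, abs_two]
    linarith [hθφ]
  rw [← Real.cos_abs]
  have := Real.cos_le_cos_of_nonneg_of_le_pi (abs_nonneg ((θ-φ)/2))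
    (by linarith : π/3 ≤ π) (by linarith : |(θ-φ)/2| ≤ π/3)
  rw [Real.cos_pi_div_three] at this
  exact this

lemma kern_lint_w_le (θ φ x : ℝ) (hθφ : |θ - φ| ≤ π/4) :
    ∫⁻ w in {w : ℝ × ℝ | w.1 ^ 2 + w.2 ^ 2 ≤ 1 / 4}, (‖kern θ φ x w‖₊ : ℝ≥0∞) ∂volume
      ≤ ENNReal.ofReal |Real.sin ((θ-φ)/2)| := by
  have hcδ : (1:ℝ)/2 ≤ Real.cos ((θ-φ)/2) := cos_half_diff_ge θ φ hθφ
  have hcpos : (0:ℝ) < Real.cos ((θ-φ)/2) := by linarith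
  set cδ := Real.cos ((θ-φ)/2) with hcδ_def
  set sδ := |Real.sin ((θ-φ)/2)| with hsδ_def
  have hsδ0 : 0 ≤ sδ := abs_nonneg _
  set ψ := (θ+φ)/2 with hψ_def
  set D : Set (ℝ × ℝ) := {w : ℝ × ℝ | w.1 ^ 2 + w.2 ^ 2 ≤ 1 / 4} with hD_def
  set T : Set (ℝ × ℝ) := {w : ℝ × ℝ |
      |2*x - ((Real.cos θ * w.1 - Real.sin θ * w.2) + (Real.cos φ * w.1 - Real.sin φ * w.2))|
      ≤ |(Real.cos θ * w.1 - Real.sin θ * w.2) - (Real.cos φ * w.1 - Real.sin φ * w.2)|}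
    with hT_def
  set V : Set (ℝ × ℝ) := {w : ℝ × ℝ | |Real.sin ψ * w.1 + Real.cos ψ * w.2| ≤ 1/2} with hV_def
  set A : Set (ℝ × ℝ) := {z : ℝ × ℝ | |z.2| ≤ 1/2 ∧ |x - cδ*z.1| ≤ sδ*|z.2|} with hA_def
  have hma : Measurable fun w : ℝ × ℝ => Real.cos θ * w.1 - Real.sin θ * w.2 :=
    (measurable_fst.const_mul _).sub (measurable_snd.const_mul _)
  have hmb : Measurable fun w : ℝ × ℝ => Real.cos φ * w.1 - Real.sin φ * w.2 :=
    (measurable_fst.const_mul _).sub (measurable_snd.const_mul _)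
  have hT : MeasurableSet T :=
    measurableSet_le ((measurable_const.sub (hma.add hmb)).abs) ((hma.sub hmb).abs)
  have hA : MeasurableSet A := by
    refine (measurableSet_le measurable_snd.abs measurable_const).inter
      (measurableSet_le ((measurable_const.sub (measurable_fst.const_mul cδ)).abs) ?_)
    exact measurable_snd.abs.const_mul sδ
  have hptw : ∀ w : ℝ × ℝ, (‖kern θ φ x w‖₊ : ℝ≥0∞) ≤ T.indicator (fun _ => 1) w := by
    intro w
    by_cases h0 : kern θ φ x w = 0
    · simp [h0]
    · obtain ⟨h1, h2⟩ := kern_between θ φ x w h0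
      have habs1 := max_sub_min_eq_abs (Real.cos θ * w.1 - Real.sin θ * w.2)
        (Real.cos φ * w.1 - Real.sin φ * w.2)
      rw [abs_sub_comm] at habs1
      have habs2 := max_add_min (Real.cos θ * w.1 - Real.sin θ * w.2)
        (Real.cos φ * w.1 - Real.sin φ * w.2)
      have hmem : w ∈ T := by
        rw [hT_def, mem_setOf_eq]
        exact abs_le.mpr ⟨by linarith, by linarith⟩
      rw [indicator_of_mem hmem]
      exact kern_enorm_le_one θ φ x w
  have hDV : D ⊆ V := fun w hw => v_abs_le ψ w hw
  have e1 : ∀ u : ℝ, |2*x - 2*cδ*u| = 2*|x - cδ*u| := by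
    intro u
    rw [show 2*x - 2*cδ*u = 2*(x - cδ*u) by ring, abs_mul, abs_two]
  have e2 : ∀ v : ℝ, |(-2) * Real.sin ((θ-φ)/2) * v| = 2*(sδ*|v|) := by
    intro v
    rw [abs_mul, abs_mul, hsδ_def]
    norm_num [mul_assoc]
  have hseteq : T ∩ V = (fun w : ℝ × ℝ =>
      (Real.cos ψ * w.1 - Real.sin ψ * w.2, Real.sin ψ * w.1 + Real.cos ψ * w.2)) ⁻¹' A := by
    ext w
    rw [mem_inter_iff, hT_def, mem_setOf_eq, hV_def, mem_setOf_eq, mem_preimage, hA_def,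
      mem_setOf_eq, trig_sum θ φ w, trig_diff θ φ w]
    have ea := e1 (Real.cos ψ * w.1 - Real.sin ψ * w.2)
    have eb := e2 (Real.sin ψ * w.1 + Real.cos ψ * w.2)
    constructor
    · rintro ⟨h1, h2⟩
      refine ⟨h2, ?_⟩
      rw [show 2 * cδ * (Real.cos ψ * w.1 - Real.sin ψ * w.2)
        = 2*cδ*(Real.cos ψ * w.1 - Real.sin ψ * w.2) by ring] at h1
      rw [show (2:ℝ)*x - 2 * cδ * (Real.cos ψ * w.1 - Real.sin ψ * w.2)
        = 2*x - 2*cδ*(Real.cos ψ * w.1 - Real.sin ψ * w.2) by ring, ea, eb] at h1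
      linarith
    · rintro ⟨h1, h2⟩
      refine ⟨?_, h1⟩
      rw [show (2:ℝ)*x - 2 * cδ * (Real.cos ψ * w.1 - Real.sin ψ * w.2)
        = 2*x - 2*cδ*(Real.cos ψ * w.1 - Real.sin ψ * w.2) by ring, ea, eb]
      linarith
  have hrot := rot_mp (Real.cos ψ) (Real.sin ψ) (Real.cos_sq_add_sin_sq ψ)
  have hsect : ∀ v : ℝ, volume ((fun u : ℝ => (u, v)) ⁻¹' A)
      ≤ (Icc (-(1:ℝ)/2) (1/2)).indicator (fun v => ENNReal.ofReal ((2*sδ/cδ) * |v|)) v := by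
    intro v
    by_cases hv : |v| ≤ 1/2
    · have hsub : ((fun u : ℝ => (u, v)) ⁻¹' A)
          ⊆ Icc ((x - sδ*|v|)/cδ) ((x + sδ*|v|)/cδ) := by
        intro u hu
        rw [mem_preimage, hA_def, mem_setOf_eq] at hu
        obtain ⟨-, hu2⟩ := hu
        obtain ⟨hl, hr⟩ := abs_le.mp hu2
        constructor
        · rw [div_le_iff₀ hcpos]
          linarith
        · rw [le_div_iff₀ hcpos]
          linarith
      refine (measure_mono hsub).trans ?_
      have hvmem : v ∈ Icc (-(1:ℝ)/2) (1/2 : ℝ) := by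
        obtain ⟨ha, hb⟩ := abs_le.mp hv
        exact mem_Icc.mpr ⟨by linarith, hb⟩
      rw [Real.volume_Icc, indicator_of_mem hvmem]
      apply ENNReal.ofReal_le_ofReal
      rw [show (x + sδ*|v|)/cδ - (x - sδ*|v|)/cδ = (2*sδ/cδ)*|v| from by field_simp; ring]
    · have hempty : ((fun u : ℝ => (u, v)) ⁻¹' A) = ∅ := by
        ext u
        simp only [mem_preimage, hA_def, mem_setOf_eq, mem_empty_iff_false, iff_false]
        rintro ⟨h1, -⟩
        exact hv h1
      rw [hempty]
      simp
  calc ∫⁻ w in D, (‖kern θ φ x w‖₊ : ℝ≥0∞) ∂volume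
      ≤ ∫⁻ w in D, T.indicator (fun _ => 1) w ∂volume := lintegral_mono hptw
    _ = (volume.restrict D) T := lintegral_indicator_one hT
    _ = volume (T ∩ D) := by
        rw [Measure.restrict_apply hT]
    _ ≤ volume (T ∩ V) := measure_mono (inter_subset_inter_right T hDV)
    _ = volume A := by rw [hseteq, hrot.measure_preimage hA.nullMeasurableSet]
    _ = ∫⁻ v : ℝ, volume ((fun u : ℝ => (u, v)) ⁻¹' A) := by
        rw [MeasureTheory.Measure.volume_eq_prod ℝ ℝ, Measure.prod_apply_symm hA]
    _ ≤ ∫⁻ v : ℝ, (Icc (-(1:ℝ)/2) (1/2)).indicator (fun v => ENNReal.ofReal ((2*sδ/cδ) * |v|)) v :=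
        lintegral_mono hsect
    _ = ∫⁻ v in Icc (-(1:ℝ)/2) (1/2), ENNReal.ofReal ((2*sδ/cδ) * |v|) :=
        lintegral_indicator measurableSet_Icc _
    _ = ENNReal.ofReal (∫ v in Icc (-(1:ℝ)/2) (1/2), (2*sδ/cδ) * |v|) := by
        refine (ofReal_integral_eq_lintegral_ofReal ?_ ?_).symm
        · exact Continuous.integrableOn_Icc (continuous_const.mul continuous_abs)
        · exact ae_of_all _ fun v =>
            mul_nonneg (div_nonneg (by linarith) hcpos.le) (abs_nonneg v)
    _ ≤ ENNReal.ofReal sδ := by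
        rw [MeasureTheory.integral_const_mul, integral_abs_Icc]
        apply ENNReal.ofReal_le_ofReal
        rw [show (2*sδ/cδ) * (1/4) = sδ/(2*cδ) from by ring]
        exact div_le_self hsδ0 (by linarith)


lemma volterra_proj_rep (F : ℝ → ℝ → ℝ) (hF : Measurable (Function.uncurry F))
    (M : ℝ) (hFb : ∀ x y, |F x y| ≤ M)
    (hFsupp : ∀ x y : ℝ, x ^ 2 + y ^ 2 > 1 / 4 → F x y = 0)
    (θ x : ℝ) (hx : -(1:ℝ)/2 ≤ x) :
    volterraHalf (proj F θ) x
      = ∫ w : ℝ × ℝ, Set.indicator {w : ℝ × ℝ | Real.cos θ * w.1 - Real.sin θ * w.2 ≤ x}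
          (fun w => F w.1 w.2) w := by
  classical
  set c := Real.cos θ with hc
  set s := Real.sin θ with hs
  have hcs : c ^ 2 + s ^ 2 = 1 := by
    rw [hc, hs]; exact Real.cos_sq_add_sin_sq θ
  -- the integrand as a function on the plane
  set f : ℝ × ℝ → ℝ := fun z => F (c * z.1 + s * z.2) (c * z.2 - s * z.1) with hf_def
  have hm1 : Measurable fun z : ℝ × ℝ => (c * z.1 + s * z.2, c * z.2 - s * z.1) :=
    ((measurable_fst.const_mul c).add (measurable_snd.const_mul s)).prodMk
      ((measurable_snd.const_mul c).sub (measurable_fst.const_mul s))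
  have hfm : Measurable f := hF.comp hm1
  set E : Set (ℝ × ℝ) := Ioc (-(1:ℝ)/2) x ×ˢ Ioc (-(1:ℝ)/2) (1/2 : ℝ) with hE_def
  have hE : MeasurableSet E := measurableSet_Ioc.prod measurableSet_Ioc
  have hEvol : (volume : Measure (ℝ × ℝ)) E ≠ ⊤ := by
    rw [MeasureTheory.Measure.volume_eq_prod ℝ ℝ, hE_def, MeasureTheory.Measure.prod_prod]
    exact (ENNReal.mul_lt_top (by simp [Real.volume_Ioc]) (by simp [Real.volume_Ioc])).ne
  have hInt : IntegrableOn f E volume :=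
    Measure.integrableOn_of_bounded hEvol hfm.aestronglyMeasurable
      (ae_of_all _ fun z => by simpa [Real.norm_eq_abs] using hFb _ _)
  -- rotation
  set Rot : ℝ × ℝ → ℝ × ℝ := fun z => (c * z.1 + s * z.2, c * z.2 - s * z.1) with hRot_def
  have hRot : MeasurePreserving Rot volume volume := by
    have h2 : c ^ 2 + (-s) ^ 2 = 1 := by rw [neg_sq]; exact hcs
    have h3 := rot_mp c (-s) h2
    have hfun : (fun w : ℝ × ℝ => (c * w.1 - (-s) * w.2, (-s) * w.1 + c * w.2)) = Rot := by
      funext w; simp only [hRot_def, Prod.mk.injEq]; exact ⟨by ring, by ring⟩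
    rwa [hfun] at h3
  -- the target set with open lower edges
  set S : Set (ℝ × ℝ) := {w | (-(1:ℝ)/2 < c * w.1 - s * w.2 ∧ c * w.1 - s * w.2 ≤ x)
      ∧ (-(1:ℝ)/2 < s * w.1 + c * w.2 ∧ s * w.1 + c * w.2 ≤ 1/2)} with hS_def
  have hma : Measurable fun w : ℝ × ℝ => c * w.1 - s * w.2 :=
    (measurable_fst.const_mul c).sub (measurable_snd.const_mul s)
  have hmb : Measurable fun w : ℝ × ℝ => s * w.1 + c * w.2 :=
    (measurable_fst.const_mul s).add (measurable_snd.const_mul c)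
  have hSeq : S = (fun w : ℝ × ℝ => (c * w.1 - s * w.2, s * w.1 + c * w.2)) ⁻¹' E := by
    ext w; simp [hS_def, hE_def]
  have hS : MeasurableSet S := by rw [hSeq]; exact hE.preimage (hma.prodMk hmb)
  set G : ℝ × ℝ → ℝ := S.indicator (fun w => F w.1 w.2) with hG_def
  have hFw : Measurable fun w : ℝ × ℝ => F w.1 w.2 := hF
  have hGmeas : Measurable G := hFw.indicator hS
  have key : ∀ z : ℝ × ℝ, E.indicator f z = G (Rot z) := by
    intro z
    have hz1 : c * (c * z.1 + s * z.2) - s * (c * z.2 - s * z.1) = z.1 := by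
      linear_combination z.1 * hcs
    have hz2 : s * (c * z.1 + s * z.2) + c * (c * z.2 - s * z.1) = z.2 := by
      linear_combination z.2 * hcs
    simp only [hG_def, hRot_def, indicator_apply, hS_def, mem_setOf_eq, hz1, hz2,
      hE_def, mem_prod, mem_Ioc, hf_def]
  calc volterraHalf (proj F θ) x
      = ∫ t in Ioc (-(1:ℝ)/2) x, proj F θ t := by
        rw [volterraHalf, integral_of_le hx]
    _ = ∫ t in Ioc (-(1:ℝ)/2) x, ∫ y in Ioc (-(1:ℝ)/2) (1/2 : ℝ), f (t, y) := by
        refine setIntegral_congr_fun measurableSet_Ioc fun t _ => ?_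
        rw [proj, integral_of_le (by norm_num : (-(1:ℝ)/2) ≤ 1/2)]
    _ = ∫ z in E, f z ∂volume := by
        rw [MeasureTheory.Measure.volume_eq_prod ℝ ℝ] at hInt ⊢
        exact (setIntegral_prod f hInt).symm
    _ = ∫ z, E.indicator f z := (MeasureTheory.integral_indicator hE).symm
    _ = ∫ z, G (Rot z) := by simp_rw [key]
    _ = ∫ w, G w ∂(Measure.map Rot volume) :=
        (integral_map hRot.measurable.aemeasurable hGmeas.aestronglyMeasurable).symm
    _ = ∫ w, G w := by rw [hRot.map_eq]
    _ = ∫ w : ℝ × ℝ, Set.indicator {w : ℝ × ℝ | c * w.1 - s * w.2 ≤ x}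
          (fun w => F w.1 w.2) w := by
        apply MeasureTheory.integral_congr_ae
        have h1 := line_null_fst c s (-(1:ℝ)/2) hcs
        have h2 := line_null_snd c s (-(1:ℝ)/2) hcs
        have hae : ∀ᵐ w : ℝ × ℝ, w ∉ ({w : ℝ × ℝ | c * w.1 - s * w.2 = -(1:ℝ)/2}
            ∪ {w : ℝ × ℝ | s * w.1 + c * w.2 = -(1:ℝ)/2}) :=
          measure_eq_zero_iff_ae_notMem.mp (measure_union_null h1 h2)
        filter_upwards [hae] with w hw
        simp only [mem_union, mem_setOf_eq, not_or] at hw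
        by_cases hFw0 : F w.1 w.2 = 0
        · simp [hG_def, indicator_apply, hFw0]
        · have hD : w.1 ^ 2 + w.2 ^ 2 ≤ 1 / 4 :=
            le_of_not_gt fun h => hFw0 (hFsupp _ _ h)
          have hsq : (c * w.1 - s * w.2) ^ 2 + (s * w.1 + c * w.2) ^ 2 ≤ 1 / 4 := by
            have hid : (c * w.1 - s * w.2) ^ 2 + (s * w.1 + c * w.2) ^ 2
                = w.1 ^ 2 + w.2 ^ 2 := by linear_combination (w.1 ^ 2 + w.2 ^ 2) * hcs
            rw [hid]; exact hD
          have ha1 : -(1:ℝ)/2 < c * w.1 - s * w.2 :=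
            lt_of_le_of_ne (by nlinarith [sq_nonneg (s * w.1 + c * w.2)]) (Ne.symm hw.1)
          have hb1 : -(1:ℝ)/2 < s * w.1 + c * w.2 :=
            lt_of_le_of_ne (by nlinarith [sq_nonneg (c * w.1 - s * w.2)]) (Ne.symm hw.2)
          have hb2 : s * w.1 + c * w.2 ≤ 1/2 := by nlinarith [sq_nonneg (c * w.1 - s * w.2)]
          have hiff : ((-(1:ℝ)/2 < c * w.1 - s * w.2 ∧ c * w.1 - s * w.2 ≤ x)
              ∧ (-(1:ℝ)/2 < s * w.1 + c * w.2 ∧ s * w.1 + c * w.2 ≤ 1/2))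
              ↔ c * w.1 - s * w.2 ≤ x :=
            ⟨fun h => h.1.2, fun h => ⟨⟨ha1, h⟩, ⟨hb1, hb2⟩⟩⟩
          simp only [hG_def, indicator_apply, hS_def, mem_setOf_eq, hiff]


section asdf
variable (F : ℝ → ℝ → ℝ) (hF : Measurable (Function.uncurry F))
    (M : ℝ) (hFb : ∀ x y, |F x y| ≤ M)
    (hFsupp : ∀ x y : ℝ, x ^ 2 + y ^ 2 > 1 / 4 → F x y = 0)

include hF in
lemma proj_measurable (θ : ℝ) : Measurable (proj F θ) := by
  have hm1 : Measurable fun z : ℝ × ℝ => (Real.cos θ * z.1 + Real.sin θ * z.2,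
      Real.cos θ * z.2 - Real.sin θ * z.1) :=
    ((measurable_fst.const_mul _).add (measurable_snd.const_mul _)).prodMk
      ((measurable_snd.const_mul _).sub (measurable_fst.const_mul _))
  have heq : proj F θ = fun x => ∫ y in Ioc (-(1:ℝ)/2) (1/2 : ℝ),
      F (Real.cos θ * x + Real.sin θ * y) (Real.cos θ * y - Real.sin θ * x) := by
    funext x; rw [proj, integral_of_le (by norm_num : (-(1:ℝ)/2) ≤ 1/2)]
  rw [heq]
  have hsm : StronglyMeasurable (Function.uncurry fun t y =>
      F (Real.cos θ * t + Real.sin θ * y) (Real.cos θ * y - Real.sin θ * t)) :=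
    Measurable.stronglyMeasurable (by exact hF.comp hm1)
  exact hsm.integral_prod_right.measurable

include hFb in
lemma proj_abs_le (θ t : ℝ) : |proj F θ t| ≤ M := by
  have hM : 0 ≤ M := (abs_nonneg _).trans (hFb 0 0)
  have h0 := intervalIntegral.norm_integral_le_of_norm_le_const
    (C := M) (a := (-(1:ℝ)/2)) (b := (1/2 : ℝ))
    (f := fun y => F (Real.cos θ * t + Real.sin θ * y) (Real.cos θ * y - Real.sin θ * t))
    (fun y _ => by simpa [Real.norm_eq_abs] using hFb _ _)
  rw [Real.norm_eq_abs] at h0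
  rw [proj]
  refine h0.trans ?_
  rw [show |(1:ℝ)/2 - (-(1:ℝ)/2)| = 1 by norm_num, mul_one]

include hF hFb in
lemma proj_intervalIntegrable (θ a b : ℝ) :
    IntervalIntegrable (proj F θ) volume a b := by
  rw [intervalIntegrable_iff]
  refine Measure.integrableOn_of_bounded ?_ (proj_measurable F hF θ).aestronglyMeasurable
    (ae_of_all _ fun t => by simpa [Real.norm_eq_abs] using proj_abs_le F M hFb θ t)
  rw [Set.uIoc, Real.volume_Ioc]
  exact ENNReal.ofReal_ne_top

include hF hFb hFsupp in
lemma kernel_rep (θ φ x : ℝ) (hx : -(1:ℝ)/2 ≤ x) :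
    volterraHalf (fun t => proj F θ t - proj F φ t) x
      = ∫ w in {w : ℝ × ℝ | w.1 ^ 2 + w.2 ^ 2 ≤ 1 / 4}, F w.1 w.2 * kern θ φ x w ∂volume := by
  classical
  set D : Set (ℝ × ℝ) := {w : ℝ × ℝ | w.1 ^ 2 + w.2 ^ 2 ≤ 1 / 4} with hD_def
  have hD : MeasurableSet D :=
    measurableSet_le ((measurable_fst.pow_const 2).add (measurable_snd.pow_const 2))
      measurable_const
  have hDsub : D ⊆ Icc (-(1:ℝ)/2) (1/2) ×ˢ Icc (-(1:ℝ)/2) (1/2) := by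
    rintro ⟨w1, w2⟩ hw
    simp only [hD_def, mem_setOf_eq] at hw
    constructor <;> rw [mem_Icc] <;>
      constructor <;> nlinarith [sq_nonneg w1, sq_nonneg w2]
  have hDvol : volume D < ⊤ := by
    refine (measure_mono hDsub).trans_lt ?_
    rw [MeasureTheory.Measure.volume_eq_prod ℝ ℝ, MeasureTheory.Measure.prod_prod]
    exact ENNReal.mul_lt_top (by simp [Real.volume_Icc]) (by simp [Real.volume_Icc])
  have hFw : Measurable fun w : ℝ × ℝ => F w.1 w.2 := hF
  have hDom : Integrable (D.indicator fun _ : ℝ × ℝ => M) volume :=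
    (integrable_indicator_iff hD).2 (integrableOn_const hDvol.ne)
  have hIndInt : ∀ ψ : ℝ, Integrable
      (Set.indicator {w : ℝ × ℝ | Real.cos ψ * w.1 - Real.sin ψ * w.2 ≤ x}
        (fun w => F w.1 w.2)) volume := by
    intro ψ
    have hSm : MeasurableSet {w : ℝ × ℝ | Real.cos ψ * w.1 - Real.sin ψ * w.2 ≤ x} :=
      measurableSet_le ((measurable_fst.const_mul _).sub (measurable_snd.const_mul _))
        measurable_const
    refine Integrable.mono' hDom (hFw.indicator hSm).aestronglyMeasurable
      (ae_of_all _ fun w => ?_)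
    by_cases hwD : w ∈ D
    · rw [indicator_of_mem hwD]
      refine (norm_indicator_le_norm_self _ _).trans ?_
      simpa [Real.norm_eq_abs] using hFb w.1 w.2
    · have hF0 : F w.1 w.2 = 0 := by
        refine hFsupp _ _ ?_
        simpa [hD_def, mem_setOf_eq, not_le] using hwD
      rw [indicator_of_notMem hwD]
      simp [indicator_apply, hF0]
  have h1 := volterra_proj_rep F hF M hFb hFsupp θ x hx
  have h2 := volterra_proj_rep F hF M hFb hFsupp φ x hx
  have hII := proj_intervalIntegrable F hF M hFb
  calc volterraHalf (fun t => proj F θ t - proj F φ t) x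
      = volterraHalf (proj F θ) x - volterraHalf (proj F φ) x := by
        rw [volterraHalf, volterraHalf, volterraHalf,
          intervalIntegral.integral_sub (hII θ _ _) (hII φ _ _)]
    _ = ∫ w : ℝ × ℝ, (Set.indicator {w : ℝ × ℝ | Real.cos θ * w.1 - Real.sin θ * w.2 ≤ x}
            (fun w => F w.1 w.2) w
          - Set.indicator {w : ℝ × ℝ | Real.cos φ * w.1 - Real.sin φ * w.2 ≤ x}
            (fun w => F w.1 w.2) w) := by
        rw [h1, h2, MeasureTheory.integral_sub (hIndInt θ) (hIndInt φ)]
    _ = ∫ w : ℝ × ℝ, D.indicator (fun w => F w.1 w.2 * kern θ φ x w) w := by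
        refine MeasureTheory.integral_congr_ae (ae_of_all _ fun w => ?_)
        by_cases hwD : w ∈ D
        · rw [indicator_of_mem hwD]
          by_cases c1 : Real.cos θ * w.1 - Real.sin θ * w.2 ≤ x <;>
            by_cases c2 : Real.cos φ * w.1 - Real.sin φ * w.2 ≤ x <;>
            simp only [kern, indicator_apply, mem_setOf_eq, c1, c2, if_true, if_false] <;> ring
        · have hF0 : F w.1 w.2 = 0 := by
            refine hFsupp _ _ ?_
            simpa [hD_def, mem_setOf_eq, not_le] using hwD
          rw [indicator_of_notMem hwD]
          simp [indicator_apply, hF0]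
    _ = _ := MeasureTheory.integral_indicator hD

end asdf




lemma kern_enorm_mul_self (θ φ x : ℝ) (w : ℝ × ℝ) :
    (‖kern θ φ x w‖₊ : ℝ≥0∞) * (‖kern θ φ x w‖₊ : ℝ≥0∞) = (‖kern θ φ x w‖₊ : ℝ≥0∞) := by
  rw [kern]
  by_cases c1 : Real.cos θ * w.1 - Real.sin θ * w.2 ≤ x <;>
    by_cases c2 : Real.cos φ * w.1 - Real.sin φ * w.2 ≤ x <;>
    simp only [c1, c2, if_true, if_false, sub_self, sub_zero, zero_sub, nnnorm_zero,
      nnnorm_one, nnnorm_neg, ENNReal.coe_zero, ENNReal.coe_one, mul_one, mul_zero]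

lemma kern_enorm_rpow (θ φ x : ℝ) (w : ℝ × ℝ) {s : ℝ} (hs : 0 < s) :
    (‖kern θ φ x w‖₊ : ℝ≥0∞) ^ s = (‖kern θ φ x w‖₊ : ℝ≥0∞) := by
  rw [kern]
  by_cases c1 : Real.cos θ * w.1 - Real.sin θ * w.2 ≤ x <;>
    by_cases c2 : Real.cos φ * w.1 - Real.sin φ * w.2 ≤ x <;>
    simp only [c1, c2, if_true, if_false, sub_self, sub_zero, zero_sub, nnnorm_zero,
      nnnorm_one, nnnorm_neg, ENNReal.coe_zero, ENNReal.coe_one, ENNReal.one_rpow,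
      ENNReal.zero_rpow_of_pos hs]

/-- Theorem (distance between projections): for `F` supported on the disc `D` of radius
`1/2` centered at the origin and angles `θ, φ` with `|θ - φ| ≤ π/4`,
`‖V(f_θ - f_φ)‖_p ≤ ‖F‖_p · √((1 - cos(θ - φ))/2)` for all `p ∈ [1,∞]`. -/
theorem volterra_projection_distance (p : ℝ≥0∞) (hp : 1 ≤ p)
    (F : ℝ → ℝ → ℝ) (hF : Measurable (Function.uncurry F))
    (M : ℝ) (hFb : ∀ x y, |F x y| ≤ M)
    (hFsupp : ∀ x y : ℝ, x ^ 2 + y ^ 2 > 1 / 4 → F x y = 0)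
    (θ φ : ℝ) (hθφ : |θ - φ| ≤ π / 4) :
    eLpNorm (volterraHalf (fun x => proj F θ x - proj F φ x)) p
        (volume.restrict (Icc (-(1:ℝ)/2) (1/2)))
      ≤ eLpNorm (fun w : ℝ × ℝ => F w.1 w.2) p
          (volume.restrict {w : ℝ × ℝ | w.1 ^ 2 + w.2 ^ 2 ≤ 1 / 4}) *
        ENNReal.ofReal (Real.sqrt ((1 - Real.cos (θ - φ)) / 2)) := by
  classical
  have hCeq : ENNReal.ofReal (Real.sqrt ((1 - Real.cos (θ - φ)) / 2))
      = ENNReal.ofReal |Real.sin ((θ-φ)/2)| := by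
    congr 1
    rw [show (1 - Real.cos (θ-φ))/2 = Real.sin ((θ-φ)/2)^2 by
      rw [Real.sin_sq_eq_half_sub, show 2*((θ-φ)/2) = θ-φ by ring]; ring]
    exact Real.sqrt_sq_eq_abs _
  rw [hCeq]
  set CE := ENNReal.ofReal |Real.sin ((θ-φ)/2)| with hCE_def
  have hCEtop : CE ≠ ∞ := ENNReal.ofReal_ne_top
  set D : Set (ℝ × ℝ) := {w : ℝ × ℝ | w.1 ^ 2 + w.2 ^ 2 ≤ 1 / 4} with hD_def
  set g : ℝ → ℝ := volterraHalf (fun x => proj F θ x - proj F φ x) with hg_def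
  have hFm : Measurable fun w : ℝ × ℝ => F w.1 w.2 := hF
  have hΦ : Measurable fun w : ℝ × ℝ => (‖F w.1 w.2‖₊ : ℝ≥0∞) := hFm.enorm
  have hκx : ∀ x : ℝ, Measurable fun w : ℝ × ℝ => (‖kern θ φ x w‖₊ : ℝ≥0∞) := fun x =>
    ((kern_measurable θ φ).comp (measurable_prodMk_left (x := x))).enorm
  have hκw : ∀ w : ℝ × ℝ, Measurable fun x : ℝ => (‖kern θ φ x w‖₊ : ℝ≥0∞) := fun w =>
    ((kern_measurable θ φ).comp (measurable_prodMk_right (y := w))).enorm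
  have hg : ∀ x ∈ Icc (-(1:ℝ)/2) (1/2 : ℝ), (‖g x‖₊ : ℝ≥0∞)
      ≤ ∫⁻ w in D, (‖F w.1 w.2‖₊ : ℝ≥0∞) * (‖kern θ φ x w‖₊ : ℝ≥0∞) ∂volume := by
    intro x hx
    rw [hg_def, show (fun x => proj F θ x - proj F φ x) = fun t => proj F θ t - proj F φ t
      from rfl, kernel_rep F hF M hFb hFsupp θ φ x hx.1]
    refine (enorm_integral_le_lintegral_enorm _).trans (le_of_eq ?_)
    refine lintegral_congr fun w => ?_
    exact enorm_mul (a := F w.1 w.2) (b := kern θ φ x w)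
  rcases eq_or_ne p ∞ with hptop | hptop
  · -- p = ∞
    subst hptop
    rw [eLpNorm_exponent_top, eLpNorm_exponent_top]
    refine essSup_le_of_ae_le _ ?_
    filter_upwards [ae_restrict_mem measurableSet_Icc] with x hx
    calc (‖g x‖₊ : ℝ≥0∞) ≤ ∫⁻ w in D, (‖F w.1 w.2‖₊ : ℝ≥0∞) * (‖kern θ φ x w‖₊ : ℝ≥0∞) ∂volume :=
          hg x hx
      _ ≤ ∫⁻ w in D, eLpNormEssSup (fun w : ℝ × ℝ => F w.1 w.2) (volume.restrict D)
            * (‖kern θ φ x w‖₊ : ℝ≥0∞) ∂volume := by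
          refine lintegral_mono_ae ?_
          filter_upwards [enorm_ae_le_eLpNormEssSup (fun w : ℝ × ℝ => F w.1 w.2)
            (volume.restrict D)] with w hw
          exact mul_le_mul_left hw _
      _ = eLpNormEssSup (fun w : ℝ × ℝ => F w.1 w.2) (volume.restrict D)
            * ∫⁻ w in D, (‖kern θ φ x w‖₊ : ℝ≥0∞) ∂volume :=
          lintegral_const_mul _ (hκx x)
      _ ≤ eLpNormEssSup (fun w : ℝ × ℝ => F w.1 w.2) (volume.restrict D) * CE :=
          mul_le_mul_right (kern_lint_w_le θ φ x hθφ) _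
  · -- p finite
    have hp0 : p ≠ 0 := (lt_of_lt_of_le zero_lt_one hp).ne'
    set r := p.toReal with hr_def
    have hr1 : 1 ≤ r := by
      rw [hr_def, ← ENNReal.toReal_one]
      exact ENNReal.toReal_mono hptop hp
    have hr0 : (0:ℝ) < r := lt_of_lt_of_le one_pos hr1
    rw [eLpNorm_eq_lintegral_rpow_enorm_toReal hp0 hptop, eLpNorm_eq_lintegral_rpow_enorm_toReal hp0 hptop]
    rw [← hr_def]
    -- pointwise Hölder bound
    have hstar : ∀ x ∈ Icc (-(1:ℝ)/2) (1/2 : ℝ), (‖g x‖₊ : ℝ≥0∞) ^ r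
        ≤ CE ^ (r - 1) * ∫⁻ w in D, (‖F w.1 w.2‖₊ : ℝ≥0∞) ^ r
            * (‖kern θ φ x w‖₊ : ℝ≥0∞) ∂volume := by
      intro x hx
      rcases eq_or_lt_of_le hr1 with hre | hrgt
      · -- r = 1
        rw [← hre]
        simp only [ENNReal.rpow_one, sub_self, ENNReal.rpow_zero, one_mul]
        exact hg x hx
      · -- 1 < r
        have hq := Real.HolderConjugate.conjExponent hrgt
        set q := Real.conjExponent r with hq_def
        have hq0 : 0 < q := hq.symm.pos
        have hrq : 1/q * r = r - 1 := by
          have h1 : 1/r + 1/q = 1 := by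
            simpa [one_div] using hq.inv_add_inv_eq_one
          field_simp at h1 ⊢
          linarith
        have hH := ENNReal.lintegral_mul_le_Lp_mul_Lq (volume.restrict D) hq
          (f := fun w => (‖F w.1 w.2‖₊ : ℝ≥0∞) * (‖kern θ φ x w‖₊ : ℝ≥0∞))
          (g := fun w => (‖kern θ φ x w‖₊ : ℝ≥0∞))
          ((hΦ.mul (hκx x)).aemeasurable) ((hκx x).aemeasurable)
        have hfg : ∀ w : ℝ × ℝ, ((fun w => (‖F w.1 w.2‖₊ : ℝ≥0∞) * (‖kern θ φ x w‖₊ : ℝ≥0∞))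
            * fun w => (‖kern θ φ x w‖₊ : ℝ≥0∞)) w
            = (‖F w.1 w.2‖₊ : ℝ≥0∞) * (‖kern θ φ x w‖₊ : ℝ≥0∞) := by
          intro w
          simp only [Pi.mul_apply]
          rw [mul_assoc, kern_enorm_mul_self]
        rw [lintegral_congr hfg] at hH
        have hf_pow : ∀ w : ℝ × ℝ, ((‖F w.1 w.2‖₊ : ℝ≥0∞) * (‖kern θ φ x w‖₊ : ℝ≥0∞)) ^ r
            = (‖F w.1 w.2‖₊ : ℝ≥0∞) ^ r * (‖kern θ φ x w‖₊ : ℝ≥0∞) := by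
          intro w
          rw [ENNReal.mul_rpow_of_nonneg _ _ hr0.le, kern_enorm_rpow θ φ x w hr0]
        have hg_pow : ∀ w : ℝ × ℝ, ((‖kern θ φ x w‖₊ : ℝ≥0∞)) ^ q
            = (‖kern θ φ x w‖₊ : ℝ≥0∞) := fun w => kern_enorm_rpow θ φ x w hq0
        simp only [hf_pow, hg_pow] at hH
        have hκD : ∫⁻ w in D, (‖kern θ φ x w‖₊ : ℝ≥0∞) ∂volume ≤ CE :=
          kern_lint_w_le θ φ x hθφ
        have hbound : (‖g x‖₊ : ℝ≥0∞)
            ≤ (∫⁻ w in D, (‖F w.1 w.2‖₊ : ℝ≥0∞) ^ r * (‖kern θ φ x w‖₊ : ℝ≥0∞) ∂volume) ^ (1/r)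
              * CE ^ (1/q) := by
          refine (hg x hx).trans (hH.trans ?_)
          exact mul_le_mul_right (ENNReal.rpow_le_rpow hκD (by positivity)) _
        calc (‖g x‖₊ : ℝ≥0∞) ^ r
            ≤ ((∫⁻ w in D, (‖F w.1 w.2‖₊ : ℝ≥0∞) ^ r * (‖kern θ φ x w‖₊ : ℝ≥0∞) ∂volume) ^ (1/r)
              * CE ^ (1/q)) ^ r := ENNReal.rpow_le_rpow hbound hr0.le
          _ = (∫⁻ w in D, (‖F w.1 w.2‖₊ : ℝ≥0∞) ^ r * (‖kern θ φ x w‖₊ : ℝ≥0∞) ∂volume)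
              * CE ^ (r - 1) := by
              rw [ENNReal.mul_rpow_of_nonneg _ _ hr0.le, ← ENNReal.rpow_mul, ← ENNReal.rpow_mul,
                one_div_mul_cancel hr0.ne', ENNReal.rpow_one, hrq]
          _ = CE ^ (r - 1) * _ := mul_comm _ _
    -- assemble
    have hDmeas : MeasurableSet D :=
      measurableSet_le ((measurable_fst.pow_const 2).add (measurable_snd.pow_const 2))
        measurable_const
    have hκ2 : Measurable fun pr : ℝ × (ℝ × ℝ) => (‖kern θ φ pr.1 pr.2‖₊ : ℝ≥0∞) :=
      (kern_measurable θ φ).enorm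
    have hchain : ∫⁻ x in Icc (-(1:ℝ)/2) (1/2), (‖g x‖₊ : ℝ≥0∞) ^ r
        ≤ CE ^ r * ∫⁻ w in D, (‖F w.1 w.2‖₊ : ℝ≥0∞) ^ r ∂volume := by
      have hCEr1 : CE ^ (r - 1) ≠ ∞ := ENNReal.rpow_ne_top_of_nonneg (by linarith) hCEtop
      calc ∫⁻ x in Icc (-(1:ℝ)/2) (1/2), (‖g x‖₊ : ℝ≥0∞) ^ r
          ≤ ∫⁻ x in Icc (-(1:ℝ)/2) (1/2), CE ^ (r - 1)
              * ∫⁻ w in D, (‖F w.1 w.2‖₊ : ℝ≥0∞) ^ r * (‖kern θ φ x w‖₊ : ℝ≥0∞) ∂volume := by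
            refine lintegral_mono_ae ?_
            filter_upwards [ae_restrict_mem measurableSet_Icc] with x hx
            exact hstar x hx
        _ = CE ^ (r - 1) * ∫⁻ x in Icc (-(1:ℝ)/2) (1/2),
              ∫⁻ w in D, (‖F w.1 w.2‖₊ : ℝ≥0∞) ^ r * (‖kern θ φ x w‖₊ : ℝ≥0∞) ∂volume :=
            lintegral_const_mul' _ _ hCEr1
        _ = CE ^ (r - 1) * ∫⁻ w in D, (∫⁻ x in Icc (-(1:ℝ)/2) (1/2),
              (‖F w.1 w.2‖₊ : ℝ≥0∞) ^ r * (‖kern θ φ x w‖₊ : ℝ≥0∞)) ∂volume := by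
            congr 1
            exact lintegral_lintegral_swap
              ((((hΦ.comp measurable_snd).pow_const r).mul hκ2).aemeasurable)
        _ ≤ CE ^ (r - 1) * ∫⁻ w in D, (‖F w.1 w.2‖₊ : ℝ≥0∞) ^ r * CE ∂volume := by
            refine mul_le_mul_right (lintegral_mono_ae ?_) _
            filter_upwards [ae_restrict_mem hDmeas] with w hwD
            rw [lintegral_const_mul _ (hκw w)]
            exact mul_le_mul_right (kern_lint_x_le θ φ w hwD) _
        _ = CE ^ (r - 1) * (CE * ∫⁻ w in D, (‖F w.1 w.2‖₊ : ℝ≥0∞) ^ r ∂volume) := by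
            rw [lintegral_mul_const' _ _ hCEtop, mul_comm (∫⁻ w in D, _ ∂volume) CE]
        _ = CE ^ r * ∫⁻ w in D, (‖F w.1 w.2‖₊ : ℝ≥0∞) ^ r ∂volume := by
            rw [← mul_assoc]
            congr 1
            rw [show CE ^ (r-1) * CE = CE ^ (r-1) * CE ^ (1:ℝ) by rw [ENNReal.rpow_one],
              ← ENNReal.rpow_add_of_nonneg _ _ (by linarith) zero_le_one]
            congr 1
            ring
    refine le_trans (ENNReal.rpow_le_rpow hchain (by positivity : (0:ℝ) ≤ 1/r)) ?_
    rw [ENNReal.mul_rpow_of_nonneg _ _ (by positivity : (0:ℝ) ≤ 1/r), ← ENNReal.rpow_mul,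
      mul_one_div_cancel hr0.ne', ENNReal.rpow_one]
    exact le_of_eq (mul_comm _ _)
end

section
/- Let c = cos(θ) and s = sin(θ) with 0 < θ < π/2. For (x,y) ∈ [-1/2,1/2]², let χ(x,y,t) = 1 if t lies between x and cx + sy (inclusive), and 0 otherwise. Then for every t ∈ [-1/2,1/2], the area ∫∫_{[-1/2,1/2]²} χ(x,y,t) dx dy is at most sqrt(1-c) / (2c·sqrt(1+c)). -/
open MeasureTheory Set Real intervalIntegral
open scoped ENNReal

private lemma tri_incr (a b t : ℝ) (ha : 0 < a) :
    ∫⁻ x in Set.Iic t, ENNReal.ofReal (a * x + b) ≤ ENNReal.ofReal ((a*t+b)^2/(2*a)) := by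
  by_cases h : a * t + b ≤ 0
  · have h0 : ∫⁻ x in Set.Iic t, ENNReal.ofReal (a * x + b)
        = ∫⁻ _ in Set.Iic t, (0:ℝ≥0∞) := by
      refine setLIntegral_congr_fun measurableSet_Iic (fun x hx => ?_)
      rw [ENNReal.ofReal_eq_zero]
      have : x ≤ t := hx
      nlinarith
    rw [h0, lintegral_zero]
    exact zero_le
  · push_neg at h
    have hx0 : -b/a < t := by rw [div_lt_iff₀ ha]; linarith
    rw [← Set.Iic_union_Ioc_eq_Iic hx0.le]
    refine le_trans (lintegral_union_le _ _ _) ?_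
    have h1 : ∫⁻ x in Set.Iic (-b/a), ENNReal.ofReal (a * x + b)
        = ∫⁻ _ in Set.Iic (-b/a), (0:ℝ≥0∞) := by
      refine setLIntegral_congr_fun measurableSet_Iic (fun x hx => ?_)
      rw [ENNReal.ofReal_eq_zero]
      have hx' : x ≤ -b/a := hx
      rw [le_div_iff₀ ha] at hx'
      nlinarith
    have hnn : 0 ≤ᵐ[volume.restrict (Set.Ioc (-b/a) t)] fun x => a * x + b := by
      refine (ae_restrict_iff' measurableSet_Ioc).2 (ae_of_all _ fun x hx => ?_)
      have hx' : -b/a < x := hx.1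
      rw [div_lt_iff₀ ha] at hx'
      show (0:ℝ) ≤ a * x + b
      nlinarith
    have hint : IntegrableOn (fun x => a * x + b) (Set.Ioc (-b/a) t) :=
      ((continuous_const.mul continuous_id).add continuous_const).integrableOn_Ioc
    have h2 : ∫⁻ x in Set.Ioc (-b/a) t, ENNReal.ofReal (a * x + b)
        = ENNReal.ofReal (∫ x in Set.Ioc (-b/a) t, (a * x + b)) :=
      (ofReal_integral_eq_lintegral_ofReal hint hnn).symm
    have h3 : ∫ x in Set.Ioc (-b/a) t, (a * x + b) = (a*t+b)^2/(2*a) := by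
      rw [← intervalIntegral.integral_of_le hx0.le]
      rw [intervalIntegral.integral_add ((by fun_prop : Continuous fun x : ℝ => a * x).intervalIntegrable _ _)
        intervalIntegrable_const]
      rw [intervalIntegral.integral_const_mul, integral_id, _root_.intervalIntegral.integral_const, smul_eq_mul]
      field_simp
      ring
    rw [h1, lintegral_zero, zero_add, h2, h3]

private lemma tri_decr (a b t : ℝ) (ha : 0 < a) :
    ∫⁻ x in Set.Ici t, ENNReal.ofReal (b - a * x) ≤ ENNReal.ofReal ((b - a*t)^2/(2*a)) := by
  by_cases h : b - a * t ≤ 0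
  · have h0 : ∫⁻ x in Set.Ici t, ENNReal.ofReal (b - a * x)
        = ∫⁻ _ in Set.Ici t, (0:ℝ≥0∞) := by
      refine setLIntegral_congr_fun measurableSet_Ici (fun x hx => ?_)
      rw [ENNReal.ofReal_eq_zero]
      have : t ≤ x := hx
      nlinarith
    rw [h0, lintegral_zero]
    exact zero_le
  · push_neg at h
    have hx1 : t < b/a := by rw [lt_div_iff₀ ha]; linarith
    rw [← Set.Ico_union_Ici_eq_Ici hx1.le]
    refine le_trans (lintegral_union_le _ _ _) ?_
    have h1 : ∫⁻ x in Set.Ici (b/a), ENNReal.ofReal (b - a * x)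
        = ∫⁻ _ in Set.Ici (b/a), (0:ℝ≥0∞) := by
      refine setLIntegral_congr_fun measurableSet_Ici (fun x hx => ?_)
      rw [ENNReal.ofReal_eq_zero]
      have hx' : b/a ≤ x := hx
      rw [div_le_iff₀ ha] at hx'
      nlinarith
    have hnn : 0 ≤ᵐ[volume.restrict (Set.Ico t (b/a))] fun x => b - a * x := by
      refine (ae_restrict_iff' measurableSet_Ico).2 (ae_of_all _ fun x hx => ?_)
      have hx' : x < b/a := hx.2
      rw [lt_div_iff₀ ha] at hx'
      show (0:ℝ) ≤ b - a * x
      nlinarith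
    have hint : IntegrableOn (fun x => b - a * x) (Set.Ico t (b/a)) :=
      (continuous_const.sub (continuous_const.mul continuous_id)).integrableOn_Icc.mono_set
        Set.Ico_subset_Icc_self
    have h2 : ∫⁻ x in Set.Ico t (b/a), ENNReal.ofReal (b - a * x)
        = ENNReal.ofReal (∫ x in Set.Ico t (b/a), (b - a * x)) :=
      (ofReal_integral_eq_lintegral_ofReal hint hnn).symm
    have h3 : ∫ x in Set.Ico t (b/a), (b - a * x) = (b - a*t)^2/(2*a) := by
      rw [MeasureTheory.integral_Ico_eq_integral_Ioo, ← MeasureTheory.integral_Ioc_eq_integral_Ioo]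
      rw [← intervalIntegral.integral_of_le hx1.le]
      rw [intervalIntegral.integral_sub intervalIntegrable_const
        ((by fun_prop : Continuous fun x : ℝ => a * x).intervalIntegrable _ _)]
      rw [intervalIntegral.integral_const_mul, integral_id, _root_.intervalIntegral.integral_const, smul_eq_mul]
      field_simp
      ring
    rw [h1, lintegral_zero, add_zero, h2, h3]

private lemma volB1 (c s t : ℝ) (hc : 0 < c) (hs : 0 < s) :
    volume {p : ℝ×ℝ | p.1 ≤ t ∧ (t - c*p.1)/s ≤ p.2 ∧ p.2 ≤ 1/2}
      ≤ ENNReal.ofReal ((c/s*t + (1/2 - t/s))^2/(2*(c/s))) := by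
  have mB : MeasurableSet {p : ℝ×ℝ | p.1 ≤ t ∧ (t - c*p.1)/s ≤ p.2 ∧ p.2 ≤ 1/2} := by
    have : {p : ℝ×ℝ | p.1 ≤ t ∧ (t - c*p.1)/s ≤ p.2 ∧ p.2 ≤ 1/2}
        = {p : ℝ×ℝ | p.1 ≤ t} ∩ ({p : ℝ×ℝ | (t - c*p.1)/s ≤ p.2} ∩ {p : ℝ×ℝ | p.2 ≤ 1/2}) := rfl
    rw [this]
    exact (measurableSet_le measurable_fst measurable_const).inter
      ((measurableSet_le (by fun_prop) measurable_snd).inter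
        (measurableSet_le measurable_snd measurable_const))
  rw [Measure.volume_eq_prod, Measure.prod_apply mB]
  have hsl : ∀ x : ℝ, volume (Prod.mk x ⁻¹' {p : ℝ×ℝ | p.1 ≤ t ∧ (t - c*p.1)/s ≤ p.2 ∧ p.2 ≤ 1/2})
      = (Iic t).indicator (fun x => ENNReal.ofReal (c/s*x + (1/2 - t/s))) x := by
    intro x
    by_cases hx : x ≤ t
    · have hpre : Prod.mk x ⁻¹' {p : ℝ×ℝ | p.1 ≤ t ∧ (t - c*p.1)/s ≤ p.2 ∧ p.2 ≤ 1/2}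
          = Icc ((t - c*x)/s) (1/2) := by
        ext y; simp [Set.mem_Icc, hx]
      rw [hpre, Real.volume_Icc, Set.indicator_of_mem (show x ∈ Iic t from hx)]
      congr 1
      field_simp
      ring
    · have hpre : Prod.mk x ⁻¹' {p : ℝ×ℝ | p.1 ≤ t ∧ (t - c*p.1)/s ≤ p.2 ∧ p.2 ≤ 1/2}
          = ∅ := by
        ext y; simp [hx]
      rw [hpre, measure_empty, Set.indicator_of_notMem (show x ∉ Iic t from hx)]
  rw [lintegral_congr hsl, lintegral_indicator measurableSet_Iic]
  exact tri_incr (c/s) (1/2 - t/s) t (div_pos hc hs)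

private lemma volB2 (c s t : ℝ) (hc : 0 < c) (hs : 0 < s) :
    volume {p : ℝ×ℝ | t ≤ p.1 ∧ -(1/2) ≤ p.2 ∧ p.2 ≤ (t - c*p.1)/s}
      ≤ ENNReal.ofReal (((t/s + 1/2) - c/s*t)^2/(2*(c/s))) := by
  have mB : MeasurableSet {p : ℝ×ℝ | t ≤ p.1 ∧ -(1/2) ≤ p.2 ∧ p.2 ≤ (t - c*p.1)/s} := by
    have : {p : ℝ×ℝ | t ≤ p.1 ∧ -(1/2) ≤ p.2 ∧ p.2 ≤ (t - c*p.1)/s}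
        = {p : ℝ×ℝ | t ≤ p.1} ∩ ({p : ℝ×ℝ | -(1/2) ≤ p.2} ∩ {p : ℝ×ℝ | p.2 ≤ (t - c*p.1)/s}) := rfl
    rw [this]
    exact (measurableSet_le measurable_const measurable_fst).inter
      ((measurableSet_le measurable_const measurable_snd).inter
        (measurableSet_le measurable_snd (by fun_prop)))
  rw [Measure.volume_eq_prod, Measure.prod_apply mB]
  have hsl : ∀ x : ℝ, volume (Prod.mk x ⁻¹' {p : ℝ×ℝ | t ≤ p.1 ∧ -(1/2) ≤ p.2 ∧ p.2 ≤ (t - c*p.1)/s})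
      = (Ici t).indicator (fun x => ENNReal.ofReal ((t/s + 1/2) - c/s*x)) x := by
    intro x
    by_cases hx : t ≤ x
    · have hpre : Prod.mk x ⁻¹' {p : ℝ×ℝ | t ≤ p.1 ∧ -(1/2) ≤ p.2 ∧ p.2 ≤ (t - c*p.1)/s}
          = Icc (-(1/2)) ((t - c*x)/s) := by
        ext y; simp [Set.mem_Icc, hx]
      rw [hpre, Real.volume_Icc, Set.indicator_of_mem (show x ∈ Ici t from hx)]
      congr 1
      field_simp
      ring
    · have hpre : Prod.mk x ⁻¹' {p : ℝ×ℝ | t ≤ p.1 ∧ -(1/2) ≤ p.2 ∧ p.2 ≤ (t - c*p.1)/s}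
          = ∅ := by
        ext y; simp [hx]
      rw [hpre, measure_empty, Set.indicator_of_notMem (show x ∉ Ici t from hx)]
  rw [lintegral_congr hsl, lintegral_indicator measurableSet_Ici]
  exact tri_decr (c/s) (t/s + 1/2) t (div_pos hc hs)

/-- Lemma: for `c = cos θ`, `s = sin θ` with `0 < θ < π/2`, and any `t ∈ [-1/2,1/2]`,
the area of the set of `(x,y)` in the square `[-1/2,1/2]²` such that `t` lies between
`x` and `cx + sy` is at most `√(1-c) / (2c√(1+c))`. -/
theorem projection_area_bound (θ t : ℝ) (hθ₀ : 0 < θ) (hθ₁ : θ < π / 2)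
    (ht : t ∈ Icc (-(1:ℝ)/2) (1/2)) :
    volume {w : ℝ × ℝ | w ∈ Icc (-(1:ℝ)/2) (1/2) ×ˢ Icc (-(1:ℝ)/2) (1/2) ∧
        t ∈ Set.uIcc w.1 (Real.cos θ * w.1 + Real.sin θ * w.2)}
      ≤ ENNReal.ofReal
          (Real.sqrt (1 - Real.cos θ) / (2 * Real.cos θ * Real.sqrt (1 + Real.cos θ))) := by
  set c := Real.cos θ with hc_def
  set s := Real.sin θ with hs_def
  have hc : 0 < c := Real.cos_pos_of_mem_Ioo ⟨by linarith [Real.pi_pos], hθ₁⟩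
  have hs : 0 < s := Real.sin_pos_of_pos_of_lt_pi hθ₀ (by linarith [Real.pi_pos])
  have hpyth : s^2 + c^2 = 1 := Real.sin_sq_add_cos_sq θ
  have hc1 : c < 1 := by nlinarith
  have hsub : {w : ℝ × ℝ | w ∈ Icc (-(1:ℝ)/2) (1/2) ×ˢ Icc (-(1:ℝ)/2) (1/2) ∧
        t ∈ Set.uIcc w.1 (c * w.1 + s * w.2)} ⊆
      {p : ℝ×ℝ | p.1 ≤ t ∧ (t - c*p.1)/s ≤ p.2 ∧ p.2 ≤ 1/2} ∪
      {p : ℝ×ℝ | t ≤ p.1 ∧ -(1/2) ≤ p.2 ∧ p.2 ≤ (t - c*p.1)/s} := by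
    rintro ⟨x, y⟩ ⟨hxy, hm⟩
    obtain ⟨hx, hy⟩ := hxy
    rw [Set.mem_uIcc] at hm
    rcases hm with ⟨h1, h2⟩ | ⟨h1, h2⟩
    · exact Or.inl ⟨h1, by rw [div_le_iff₀ hs]; nlinarith, hy.2⟩
    · exact Or.inr ⟨h2, by linarith [hy.1], by rw [le_div_iff₀ hs]; nlinarith⟩
  refine le_trans (measure_mono hsub) ?_
  refine le_trans (measure_union_le _ _) ?_
  refine le_trans (add_le_add (volB1 c s t hc hs) (volB2 c s t hc hs)) ?_
  rw [← ENNReal.ofReal_add (by positivity) (by positivity)]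
  apply ENNReal.ofReal_le_ofReal
  have ht2 : t^2 ≤ 1/4 := by nlinarith [ht.1, ht.2]
  have hrhs : Real.sqrt (1-c) / (2*c*Real.sqrt (1+c)) = (1-c)/(2*c*s) := by
    have h1 : Real.sqrt (1-c) * Real.sqrt (1+c) = s := by
      rw [← Real.sqrt_mul (by linarith)]
      rw [show (1-c)*(1+c) = s^2 by nlinarith]
      exact Real.sqrt_sq hs.le
    have hsq1c : (0:ℝ) < Real.sqrt (1+c) := Real.sqrt_pos.2 (by linarith)
    have h2 : Real.sqrt (1-c) * Real.sqrt (1-c) = 1-c :=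
      Real.mul_self_sqrt (by linarith)
    rw [div_eq_div_iff (by positivity) (by positivity), ← h1]
    linear_combination (2*c*Real.sqrt (1+c)) * h2
  rw [hrhs]
  have e1 : (c/s*t + (1/2 - t/s))^2/(2*(c/s)) = (s/2 - (1-c)*t)^2/(2*c*s) := by
    rw [div_eq_div_iff (by positivity) (by positivity)]
    field_simp
    ring
  have e2 : ((t/s + 1/2) - c/s*t)^2/(2*(c/s)) = (s/2 + (1-c)*t)^2/(2*c*s) := by
    rw [div_eq_div_iff (by positivity) (by positivity)]
    field_simp
    ring
  rw [e1, e2, ← add_div]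
  rw [div_le_div_iff₀ (by positivity) (by positivity)]
  nlinarith [mul_nonneg (sq_nonneg (1-c)) (show (0:ℝ) ≤ 1/4 - t^2 by linarith),
    mul_pos hc hs]
end

section
/- Let f : [0,1] → ℝ satisfy |f(x)| ≤ L and |f(x) - f(y)| ≤ L|x - y| for all x, y. Let x_n ∈ ℝⁿ have entries x_j = f(j/n). Then for all p ∈ [1,∞], | ‖x_n‖_p* − ‖f‖_p* | ≤ CL/n for an absolute constant C independent of p, f, and n. -/
open MeasureTheory Set intervalIntegral
open scoped ENNReal NNReal

/-- The discrete Volterra `p`-norm of the vector `(w 1, ..., w n)`: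
`‖w‖_p^* = ((1/n) Σ_{k=1}^n |(1/n) Σ_{j=1}^k w_j|^p)^{1/p}` for `p < ∞`,
and `max_{1≤k≤n} |(1/n) Σ_{j=1}^k w_j|` for `p = ∞`. -/
noncomputable def discreteVolterraNorm (p : ℝ≥0∞) (n : ℕ) (w : ℕ → ℝ) : ℝ :=
  let S : ℕ → ℝ := fun k => (1 / n) * ∑ j ∈ Finset.Icc 1 k, w j
  if p = ∞ then ((Finset.Icc 1 n).sup fun k => ‖S k‖₊ : ℝ≥0)
  else ((1 / n) * ∑ k ∈ Finset.Icc 1 n, |S k| ^ p.toReal) ^ (1 / p.toReal)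

noncomputable def vstep (n : ℕ) (c : ℕ → ℝ) : ℝ → ℝ := fun x => c ⌈(n : ℝ) * x⌉₊

lemma vstep_measurable (n : ℕ) (c : ℕ → ℝ) : Measurable (vstep n c) := by
  have h1 : Monotone (fun x : ℝ => ⌈(n : ℝ) * x⌉₊) := fun a b hab =>
    Nat.ceil_le_ceil (mul_le_mul_of_nonneg_left hab n.cast_nonneg)
  exact measurable_from_nat.comp h1.measurable

lemma ceil_piece {n k : ℕ} (hn : 1 ≤ n) (hk : 1 ≤ k) {x : ℝ}
    (hx : x ∈ Ioc (((k : ℝ) - 1) / n) ((k : ℝ) / n)) : ⌈(n : ℝ) * x⌉₊ = k := by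
  have hn0 : (0 : ℝ) < n := by exact_mod_cast hn
  rw [Nat.ceil_eq_iff (by omega)]
  constructor
  · have h1 := hx.1
    rw [div_lt_iff₀ hn0] at h1
    have heq : ((k - 1 : ℕ) : ℝ) = (k : ℝ) - 1 := by
      push_cast [Nat.cast_sub hk]; ring
    rw [heq]; nlinarith
  · have h2 := hx.2
    rw [le_div_iff₀ hn0] at h2
    nlinarith

lemma mem_piece {n : ℕ} (hn : 1 ≤ n) {x : ℝ} (hx : x ∈ Ioc (0:ℝ) 1) :
    1 ≤ ⌈(n : ℝ) * x⌉₊ ∧ ⌈(n : ℝ) * x⌉₊ ≤ n ∧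
      x ∈ Ioc (((⌈(n : ℝ) * x⌉₊ : ℝ) - 1) / n) ((⌈(n : ℝ) * x⌉₊ : ℝ) / n) := by
  have hn0 : (0 : ℝ) < n := by exact_mod_cast hn
  have hx0 : 0 < (n : ℝ) * x := by nlinarith [hx.1]
  refine ⟨Nat.ceil_pos.2 hx0, Nat.ceil_le.2 (by nlinarith [hx.2]), ?_, ?_⟩
  · rw [div_lt_iff₀ hn0]
    have := Nat.ceil_lt_add_one hx0.le
    nlinarith
  · rw [le_div_iff₀ hn0]
    have := Nat.le_ceil ((n : ℝ) * x)
    nlinarith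

lemma cover {n : ℕ} (hn : 1 ≤ n) :
    Ioc (0:ℝ) 1 = ⋃ k ∈ Finset.Icc 1 n, Ioc (((k : ℝ) - 1) / n) ((k : ℝ) / n) := by
  have hn0 : (0 : ℝ) < n := by exact_mod_cast hn
  ext x
  simp only [mem_iUnion, Finset.mem_Icc, exists_prop]
  constructor
  · intro hx
    obtain ⟨h1, h2, h3⟩ := mem_piece hn hx
    exact ⟨⌈(n : ℝ) * x⌉₊, ⟨h1, h2⟩, h3⟩
  · rintro ⟨k, ⟨hk1, hkn⟩, h1⟩
    have hk1' : (1 : ℝ) ≤ (k : ℝ) := by exact_mod_cast hk1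
    have hkn' : (k : ℝ) ≤ (n : ℝ) := by exact_mod_cast hkn
    constructor
    · have hge : (0 : ℝ) ≤ ((k : ℝ) - 1) / n := by
        apply div_nonneg _ hn0.le; linarith
      exact lt_of_le_of_lt hge h1.1
    · calc x ≤ (k : ℝ) / n := h1.2
        _ ≤ 1 := by rw [div_le_one hn0]; exact hkn'

lemma pieces_disjoint {n : ℕ} :
    (↑(Finset.Icc 1 n) : Set ℕ).PairwiseDisjoint
      (fun k => Ioc (((k : ℝ) - 1) / n) ((k : ℝ) / n)) := by
  have key : ∀ k l : ℕ, k < l →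
      Disjoint (Ioc (((k : ℝ) - 1) / n) ((k : ℝ) / n))
        (Ioc (((l : ℝ) - 1) / n) ((l : ℝ) / n)) := by
    intro k l h
    apply Set.Ioc_disjoint_Ioc.2
    have hkl : (k : ℝ) ≤ (l : ℝ) - 1 := by
      have : (k : ℝ) + 1 ≤ l := by exact_mod_cast h
      linarith
    have hdiv : (k : ℝ) / n ≤ ((l : ℝ) - 1) / n := by
      rcases eq_or_lt_of_le (Nat.cast_nonneg n : (0:ℝ) ≤ n) with h0 | h0
      . simp [← h0]
      . exact (div_le_div_iff_of_pos_right h0).2 hkl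
    exact le_trans inf_le_left (le_trans hdiv le_sup_right)
  intro k _ l _ hkl
  rcases lt_or_gt_of_ne hkl with h | h
  · exact key k l h
  · exact (key l k h).symm

lemma step_lintegral {n : ℕ} (hn : 1 ≤ n) (c : ℕ → ℝ) (F : ℝ → ℝ≥0∞) :
    ∫⁻ x in Icc (0:ℝ) 1, F (vstep n c x) =
      ∑ k ∈ Finset.Icc 1 n, F (c k) * ENNReal.ofReal (1 / n) := by
  have hn0 : (0 : ℝ) < n := by exact_mod_cast hn
  have hres : volume.restrict (Icc (0:ℝ) 1) = volume.restrict (Ioc (0:ℝ) 1) :=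
    (Measure.restrict_congr_set Ioc_ae_eq_Icc).symm
  rw [hres, cover hn,
    lintegral_biUnion_finset pieces_disjoint (fun k _ => measurableSet_Ioc)]
  refine Finset.sum_congr rfl fun k hk => ?_
  rw [Finset.mem_Icc] at hk
  have hconst : ∀ x ∈ Ioc (((k : ℝ) - 1) / n) ((k : ℝ) / n),
      F (vstep n c x) = F (c k) := by
    intro x hx
    unfold vstep
    rw [ceil_piece hn hk.1 hx]
  rw [setLIntegral_congr_fun measurableSet_Ioc hconst,
    setLIntegral_const, Real.volume_Ioc]
  congr 1
  congr 1
  field_simp; ring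

lemma discrete_eq_eLpNorm (p : ℝ≥0∞) (hp : 1 ≤ p) {n : ℕ} (hn : 1 ≤ n) (w : ℕ → ℝ) :
    discreteVolterraNorm p n w =
      (eLpNorm (vstep n fun k => (1 / (n:ℝ)) * ∑ j ∈ Finset.Icc 1 k, w j) p
        (volume.restrict (Icc (0:ℝ) 1))).toReal := by
  have hn0 : (0 : ℝ) < n := by exact_mod_cast hn
  set S : ℕ → ℝ := fun k => (1 / (n:ℝ)) * ∑ j ∈ Finset.Icc 1 k, w j with hS
  have hp0 : p ≠ 0 := by positivity
  by_cases hptop : p = ∞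
  · subst hptop
    simp only [discreteVolterraNorm, if_pos rfl]
    have key : eLpNorm (vstep n S) ⊤ (volume.restrict (Icc (0:ℝ) 1)) =
        ((Finset.Icc 1 n).sup fun k => ‖S k‖₊ : ℝ≥0) := by
      apply le_antisymm
      · have hb : ∀ᵐ x ∂(volume.restrict (Icc (0:ℝ) 1)),
            ‖vstep n S x‖ ≤ (((Finset.Icc 1 n).sup fun k => ‖S k‖₊ : ℝ≥0) : ℝ) := by
          filter_upwards [ae_restrict_mem measurableSet_Icc] with x hx
          rcases eq_or_lt_of_le hx.1 with h0 | h0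
          · have : vstep n S x = 0 := by
              unfold vstep
              rw [← h0]
              simp [hS]
            rw [this]; simp
          · obtain ⟨h1, h2, _⟩ := mem_piece hn ⟨h0, hx.2⟩
            have hle : ‖vstep n S x‖₊ ≤ ((Finset.Icc 1 n).sup fun k => ‖S k‖₊) := by
              apply Finset.le_sup (f := fun k => ‖S k‖₊)
              rw [Finset.mem_Icc]; exact ⟨h1, h2⟩
            exact_mod_cast hle
        calc eLpNorm (vstep n S) ⊤ (volume.restrict (Icc (0:ℝ) 1))
            ≤ (volume.restrict (Icc (0:ℝ) 1)) univ ^ (⊤ : ℝ≥0∞).toReal⁻¹ *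
              ENNReal.ofReal (((Finset.Icc 1 n).sup fun k => ‖S k‖₊ : ℝ≥0) : ℝ) :=
              eLpNorm_le_of_ae_bound hb
          _ = _ := by
              simp [ENNReal.ofReal_coe_nnreal]
      · obtain ⟨k₀, hk₀mem, hk₀⟩ := Finset.exists_mem_eq_sup (Finset.Icc 1 n)
          (Finset.nonempty_Icc.2 hn) fun k => ‖S k‖₊
        rw [Finset.mem_Icc] at hk₀mem
        rw [hk₀]
        have hsub : Ioc (((k₀:ℝ) - 1) / n) ((k₀:ℝ) / n) ⊆ Icc (0:ℝ) 1 := by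
          intro x hx
          have hk1' : (1:ℝ) ≤ k₀ := by exact_mod_cast hk₀mem.1
          have hkn' : (k₀:ℝ) ≤ n := by exact_mod_cast hk₀mem.2
          constructor
          · have : (0:ℝ) ≤ ((k₀:ℝ) - 1)/n := by apply div_nonneg _ hn0.le; linarith
            linarith [hx.1]
          · calc x ≤ (k₀:ℝ)/n := hx.2
              _ ≤ 1 := by rw [div_le_one hn0]; exact hkn'
        have hμ : volume.restrict (Ioc (((k₀:ℝ) - 1) / n) ((k₀:ℝ) / n)) ≠ 0 := by
          rw [Ne, Measure.restrict_eq_zero, Real.volume_Ioc]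
          intro h
          rw [ENNReal.ofReal_eq_zero] at h
          have : ((k₀:ℝ)/n - ((k₀:ℝ) - 1)/n) = 1/n := by field_simp; ring
          rw [this] at h
          have : (0:ℝ) < 1/n := by positivity
          linarith
        calc (↑‖S k₀‖₊ : ℝ≥0∞)
            = eLpNorm (vstep n S) ⊤ (volume.restrict (Ioc (((k₀:ℝ) - 1) / n) ((k₀:ℝ) / n))) := by
              rw [eLpNorm_congr_ae (g := fun _ => S k₀)
                (((ae_restrict_mem measurableSet_Ioc).mono fun x hx => by
                  unfold vstep; rw [ceil_piece hn hk₀mem.1 hx]))]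
              rw [eLpNorm_exponent_top, eLpNormEssSup_const _ hμ]; rfl
          _ ≤ eLpNorm (vstep n S) ⊤ (volume.restrict (Icc (0:ℝ) 1)) :=
              eLpNorm_mono_measure _ (Measure.restrict_mono hsub le_rfl)
    rw [key, ENNReal.coe_toReal]
    simp only [if_true]
    rfl
  · have hq : 0 < p.toReal := ENNReal.toReal_pos hp0 hptop
    simp only [discreteVolterraNorm, if_neg hptop]
    rw [eLpNorm_eq_lintegral_rpow_enorm_toReal hp0 hptop]
    simp only [enorm_eq_nnnorm]
    rw [step_lintegral hn S (fun r => (‖r‖₊ : ℝ≥0∞) ^ p.toReal)]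
    rw [← ENNReal.toReal_rpow]
    congr 1
    rw [ENNReal.toReal_sum (fun k _ => by
      apply ENNReal.mul_ne_top _ ENNReal.ofReal_ne_top
      exact (ENNReal.rpow_lt_top_of_nonneg hq.le ENNReal.coe_ne_top).ne)]
    rw [Finset.mul_sum]
    refine Finset.sum_congr rfl fun k _ => ?_
    rw [ENNReal.toReal_mul, ← ENNReal.toReal_rpow, ENNReal.toReal_ofReal (by positivity)]
    rw [ENNReal.coe_toReal, coe_nnnorm, Real.norm_eq_abs]
    ring

section analytic
variable {L : ℝ} {f : ℝ → ℝ}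

lemma f_contOn (hl : ∀ x ∈ Icc (0:ℝ) 1, ∀ y ∈ Icc (0:ℝ) 1, |f x - f y| ≤ L * |x - y|) :
    ContinuousOn f (Icc (0:ℝ) 1) := by
  apply LipschitzOnWith.continuousOn (K := L.toNNReal)
  apply LipschitzOnWith.of_dist_le_mul
  intro x hx y hy
  rw [Real.dist_eq, Real.dist_eq]
  calc |f x - f y| ≤ L * |x - y| := hl x hx y hy
    _ ≤ ↑L.toNNReal * |x - y| := by
        apply mul_le_mul_of_nonneg_right _ (abs_nonneg _)
        rw [Real.coe_toNNReal']; exact le_max_left _ _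

lemma f_intgr (hl : ∀ x ∈ Icc (0:ℝ) 1, ∀ y ∈ Icc (0:ℝ) 1, |f x - f y| ≤ L * |x - y|)
    {a b : ℝ} (ha : a ∈ Icc (0:ℝ) 1) (hb : b ∈ Icc (0:ℝ) 1) :
    IntervalIntegrable f volume a b :=
  ((f_contOn hl).mono (uIcc_subset_Icc ha hb)).intervalIntegrable

lemma V_sub (hbd : ∀ x ∈ Icc (0:ℝ) 1, |f x| ≤ L)
    (hl : ∀ x ∈ Icc (0:ℝ) 1, ∀ y ∈ Icc (0:ℝ) 1, |f x - f y| ≤ L * |x - y|)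
    {a b : ℝ} (ha : a ∈ Icc (0:ℝ) 1) (hb : b ∈ Icc (0:ℝ) 1) :
    |(∫ t in (0:ℝ)..b, f t) - ∫ t in (0:ℝ)..a, f t| ≤ L * |b - a| := by
  have h0 : (0:ℝ) ∈ Icc (0:ℝ) 1 := ⟨le_refl 0, zero_le_one⟩
  have heq : (∫ t in (0:ℝ)..b, f t) - ∫ t in (0:ℝ)..a, f t = ∫ t in a..b, f t := by
    rw [← intervalIntegral.integral_add_adjacent_intervals (f_intgr hl h0 ha) (f_intgr hl ha hb)]
    ring
  rw [heq, ← Real.norm_eq_abs]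
  apply intervalIntegral.norm_integral_le_of_norm_le_const
  intro t ht
  have hsub : Set.uIoc a b ⊆ Icc (0:ℝ) 1 :=
    subset_trans Ioc_subset_Icc_self (uIcc_subset_Icc ha hb)
  rw [Real.norm_eq_abs]
  exact hbd t (hsub ht)

lemma riemann_bound (hbd : ∀ x ∈ Icc (0:ℝ) 1, |f x| ≤ L)
    (hl : ∀ x ∈ Icc (0:ℝ) 1, ∀ y ∈ Icc (0:ℝ) 1, |f x - f y| ≤ L * |x - y|)
    {n : ℕ} (hn : 1 ≤ n) :
    ∀ k : ℕ, k ≤ n →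
      |(1 / (n:ℝ)) * ∑ j ∈ Finset.Icc 1 k, f (j / n) - ∫ t in (0:ℝ)..((k:ℝ)/n), f t|
        ≤ k * L / n ^ 2 := by
  have hn0 : (0:ℝ) < n := by exact_mod_cast hn
  have hL0 : 0 ≤ L := le_trans (abs_nonneg _) (hbd 0 ⟨le_refl 0, zero_le_one⟩)
  have hmem : ∀ {j : ℕ}, j ≤ n → ((j:ℝ)/n) ∈ Icc (0:ℝ) 1 := by
    intro j hj
    constructor
    · positivity
    · rw [div_le_one hn0]; exact_mod_cast hj
  intro k
  induction k with
  | zero => intro _; simp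
  | succ k ih =>
    intro hk1
    have hk : k ≤ n := Nat.le_of_succ_le hk1
    have ihk := ih hk
    have hkn : ((k:ℝ)/n) ∈ Icc (0:ℝ) 1 := hmem hk
    have hk1n : (((k:ℝ)+1)/n) ∈ Icc (0:ℝ) 1 := by
      have := hmem hk1
      push_cast at this
      exact this
    have hle : (k:ℝ)/n ≤ ((k:ℝ)+1)/n := by
      apply (div_le_div_iff_of_pos_right hn0).2; linarith
    -- split the integral
    have hsplit : (∫ t in (0:ℝ)..(((k:ℝ)+1)/n), f t) =
        (∫ t in (0:ℝ)..((k:ℝ)/n), f t) + ∫ t in ((k:ℝ)/n)..(((k:ℝ)+1)/n), f t := by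
      rw [intervalIntegral.integral_add_adjacent_intervals
        (f_intgr hl ⟨le_refl 0, zero_le_one⟩ hkn) (f_intgr hl hkn hk1n)]
    -- split the sum
    have hsum : ∑ j ∈ Finset.Icc 1 (k+1), f ((j:ℝ) / n)
        = (∑ j ∈ Finset.Icc 1 k, f ((j:ℝ) / n)) + f (((k:ℝ)+1)/n) := by
      rw [Finset.sum_Icc_succ_top (Nat.one_le_iff_ne_zero.2 (Nat.succ_ne_zero k))]
      have hc : ((k+1:ℕ):ℝ) = (k:ℝ)+1 := by push_cast; ring
      rw [hc]
    -- the new term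
    have hterm : |(1/(n:ℝ)) * f (((k:ℝ)+1)/n) - ∫ t in ((k:ℝ)/n)..(((k:ℝ)+1)/n), f t|
        ≤ L / n^2 := by
      have hconst : (∫ _ in ((k:ℝ)/n)..(((k:ℝ)+1)/n), f (((k:ℝ)+1)/n))
          = (1/(n:ℝ)) * f (((k:ℝ)+1)/n) := by
        rw [intervalIntegral.integral_const, smul_eq_mul]
        congr 1
        field_simp; ring
      rw [← hconst, ← intervalIntegral.integral_sub intervalIntegrable_const
        (f_intgr hl hkn hk1n), ← Real.norm_eq_abs]
      have hbnd : ∀ t ∈ Set.uIoc ((k:ℝ)/n) (((k:ℝ)+1)/n),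
          ‖f (((k:ℝ)+1)/n) - f t‖ ≤ L / n := by
        intro t ht
        rw [Set.uIoc_of_le hle] at ht
        have htI : t ∈ Icc (0:ℝ) 1 := by
          constructor
          · exact le_trans hkn.1 ht.1.le
          · exact le_trans ht.2 hk1n.2
        rw [Real.norm_eq_abs]
        have habs : |((k:ℝ)+1)/n - t| ≤ 1/n := by
          rw [abs_of_nonneg (by linarith [ht.2])]
          have hlow : (k:ℝ)/n ≤ t := ht.1.le
          have h1n : ((k:ℝ)+1)/n - (k:ℝ)/n = 1/n := by field_simp; ring
          linarith
        calc |f (((k:ℝ)+1)/n) - f t| ≤ L * |((k:ℝ)+1)/n - t| := hl _ hk1n t htI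
          _ ≤ L * (1/n) := mul_le_mul_of_nonneg_left habs hL0
          _ = L / n := by ring
      calc ‖∫ t in ((k:ℝ)/n)..(((k:ℝ)+1)/n), (f (((k:ℝ)+1)/n) - f t)‖
          ≤ (L/n) * |(((k:ℝ)+1)/n) - (k:ℝ)/n| :=
            intervalIntegral.norm_integral_le_of_norm_le_const hbnd
        _ = L / n^2 := by
            rw [abs_of_nonneg (by linarith)]
            have h1n : ((k:ℝ)+1)/n - (k:ℝ)/n = 1/n := by field_simp; ring
            rw [h1n]
            ring
    -- combine
    have hc2 : ((k+1:ℕ):ℝ) = (k:ℝ)+1 := by push_cast; ring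
    rw [hc2]
    have hdecomp : (1 / (n:ℝ)) * ∑ j ∈ Finset.Icc 1 (k+1), f ((j:ℝ) / n)
          - ∫ t in (0:ℝ)..(((k:ℝ)+1)/n), f t
        = ((1 / (n:ℝ)) * ∑ j ∈ Finset.Icc 1 k, f ((j:ℝ) / n)
            - ∫ t in (0:ℝ)..((k:ℝ)/n), f t)
          + ((1/(n:ℝ)) * f (((k:ℝ)+1)/n) - ∫ t in ((k:ℝ)/n)..(((k:ℝ)+1)/n), f t) := by
      rw [hsum, hsplit]
      ring
    calc |(1 / (n:ℝ)) * ∑ j ∈ Finset.Icc 1 (k+1), f ((j:ℝ) / n)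
          - ∫ t in (0:ℝ)..(((k:ℝ)+1)/n), f t|
        ≤ |(1 / (n:ℝ)) * ∑ j ∈ Finset.Icc 1 k, f ((j:ℝ) / n)
            - ∫ t in (0:ℝ)..((k:ℝ)/n), f t|
          + |(1/(n:ℝ)) * f (((k:ℝ)+1)/n) - ∫ t in ((k:ℝ)/n)..(((k:ℝ)+1)/n), f t| := by
            rw [hdecomp]; exact abs_add_le _ _
      _ ≤ k * L / n^2 + L / n^2 := add_le_add ihk hterm
      _ = ((k:ℝ)+1) * L / n^2 := by ring

end analytic

/-- The continuous Volterra `p`-norm `‖f‖_p^* = ‖V f‖_{L^p[0,1]}`. -/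
noncomputable def contVolterraNorm (p : ℝ≥0∞) (f : ℝ → ℝ) : ℝ :=
  (eLpNorm (fun x => ∫ t in (0:ℝ)..x, f t) p (volume.restrict (Icc (0:ℝ) 1))).toReal

/-- Theorem (convergence of the discrete norm): there is an absolute constant `C` such
that for every `p ∈ [1,∞]`, every `L`-bounded `L`-Lipschitz `f : [0,1] → ℝ` and every
`n ≥ 1`, the discrete Volterra norm of the sample vector `(f(j/n))_{j=1}^n` differs from
the continuous Volterra norm of `f` by at most `C L / n`. -/
theorem discrete_volterra_convergence :
    ∃ C : ℝ, 0 < C ∧ ∀ (p : ℝ≥0∞), 1 ≤ p → ∀ (L : ℝ) (f : ℝ → ℝ),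
      (∀ x ∈ Icc (0:ℝ) 1, |f x| ≤ L) →
      (∀ x ∈ Icc (0:ℝ) 1, ∀ y ∈ Icc (0:ℝ) 1, |f x - f y| ≤ L * |x - y|) →
      ∀ n : ℕ, 1 ≤ n →
      |discreteVolterraNorm p n (fun j => f (j / n)) - contVolterraNorm p f|
        ≤ C * L / n := by
  refine ⟨2, by norm_num, ?_⟩
  intro p hp L f hbd hl n hn
  have hn0 : (0:ℝ) < n := by exact_mod_cast hn
  have hL0 : 0 ≤ L := le_trans (abs_nonneg _) (hbd 0 ⟨le_refl 0, zero_le_one⟩)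
  set μ := volume.restrict (Icc (0:ℝ) 1) with hμ
  set V : ℝ → ℝ := fun x => ∫ t in (0:ℝ)..x, f t with hV
  set S : ℕ → ℝ := fun k => (1 / (n:ℝ)) * ∑ j ∈ Finset.Icc 1 k, f (j / n) with hSdef
  have hdisc : discreteVolterraNorm p n (fun j => f (j/n)) =
      (eLpNorm (vstep n S) p μ).toReal := by
    rw [hSdef, hμ]
    exact discrete_eq_eLpNorm p hp hn _
  -- |S k - V (k/n)| ≤ L / n for k ≤ n
  have hSV : ∀ k : ℕ, k ≤ n → |S k - V ((k:ℝ)/n)| ≤ L / n := by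
    intro k hk
    calc |S k - V ((k:ℝ)/n)| ≤ k * L / n^2 := riemann_bound hbd hl hn k hk
      _ ≤ (n:ℝ) * L / (n:ℝ)^2 := by
          have hkn' : (k:ℝ) ≤ n := by exact_mod_cast hk
          have hmul : (k:ℝ) * L ≤ (n:ℝ) * L := mul_le_mul_of_nonneg_right hkn' hL0
          exact (div_le_div_iff_of_pos_right (by positivity : (0:ℝ) < (n:ℝ)^2)).2 hmul
      _ = L / n := by field_simp
  -- pointwise bound on the step function minus V
  have hstepV : ∀ x ∈ Icc (0:ℝ) 1, |vstep n S x - V x| ≤ 2 * L / n := by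
    intro x hx
    rcases eq_or_lt_of_le hx.1 with h0 | h0
    · have hv0 : vstep n S x = 0 := by
        unfold vstep
        rw [← h0]
        simp [hSdef]
      have hV0 : V x = 0 := by rw [← h0, hV]; simp
      rw [hv0, hV0]
      simp
      positivity
    · obtain ⟨h1, h2, h3⟩ := mem_piece hn ⟨h0, hx.2⟩
      set k := ⌈(n:ℝ) * x⌉₊ with hk
      have hvx : vstep n S x = S k := rfl
      have hknI : ((k:ℝ)/n) ∈ Icc (0:ℝ) 1 := by
        constructor
        · positivity
        · rw [div_le_one hn0]; exact_mod_cast h2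
      have hVV : |V ((k:ℝ)/n) - V x| ≤ L / n := by
        have hVs := V_sub hbd hl hx hknI
        calc |V ((k:ℝ)/n) - V x| ≤ L * |(k:ℝ)/n - x| := hVs
          _ ≤ L * (1/n) := by
              apply mul_le_mul_of_nonneg_left ?_ hL0
              rw [abs_of_nonneg (by linarith [h3.2])]
              have hlow := h3.1
              have h1n : ((k:ℝ))/n - ((k:ℝ)-1)/n = 1/n := by field_simp; ring
              linarith
          _ = L / n := by ring
      calc |vstep n S x - V x|
          = |(S k - V ((k:ℝ)/n)) + (V ((k:ℝ)/n) - V x)| := by rw [hvx]; congr 1; ring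
        _ ≤ |S k - V ((k:ℝ)/n)| + |V ((k:ℝ)/n) - V x| := abs_add_le _ _
        _ ≤ L / n + L / n := add_le_add (hSV k h2) hVV
        _ = 2 * L / n := by ring
  -- boundedness
  have hSb : ∀ k : ℕ, k ≤ n → |S k| ≤ L := by
    intro k hk
    rw [hSdef]
    have habs : |∑ j ∈ Finset.Icc 1 k, f ((j:ℝ) / n)| ≤ (k:ℝ) * L := by
      calc |∑ j ∈ Finset.Icc 1 k, f ((j:ℝ) / n)|
          ≤ ∑ j ∈ Finset.Icc 1 k, |f ((j:ℝ) / n)| := Finset.abs_sum_le_sum_abs _ _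
        _ ≤ ∑ _j ∈ Finset.Icc 1 k, L := by
            apply Finset.sum_le_sum
            intro j hj
            rw [Finset.mem_Icc] at hj
            apply hbd
            constructor
            · positivity
            · rw [div_le_one hn0]
              exact_mod_cast le_trans hj.2 hk
        _ = (k:ℝ) * L := by
            rw [Finset.sum_const, Nat.card_Icc]
            simp [nsmul_eq_mul]
    have hkn : (k:ℝ) ≤ n := by exact_mod_cast hk
    rw [abs_mul, abs_of_nonneg (by positivity : (0:ℝ) ≤ 1/(n:ℝ))]
    calc (1/(n:ℝ)) * |∑ j ∈ Finset.Icc 1 k, f ((j:ℝ) / n)|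
        ≤ (1/(n:ℝ)) * ((k:ℝ) * L) := by
          apply mul_le_mul_of_nonneg_left habs (by positivity)
      _ ≤ L := by
          rw [div_mul_eq_mul_div, one_mul, div_le_iff₀ hn0]
          nlinarith
  have hg_bd : ∀ᵐ x ∂μ, ‖vstep n S x‖ ≤ L := by
    rw [hμ]
    filter_upwards [ae_restrict_mem measurableSet_Icc] with x hx
    rw [Real.norm_eq_abs]
    rcases eq_or_lt_of_le hx.1 with h0 | h0
    · have hv0 : vstep n S x = 0 := by
        unfold vstep; rw [← h0]; simp [hSdef]
      rw [hv0]; simpa using hL0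
    · obtain ⟨h1, h2, _⟩ := mem_piece hn ⟨h0, hx.2⟩
      exact hSb _ h2
  have hV_bd : ∀ᵐ x ∂μ, ‖V x‖ ≤ L := by
    rw [hμ]
    filter_upwards [ae_restrict_mem measurableSet_Icc] with x hx
    rw [Real.norm_eq_abs]
    have h00 : (0:ℝ) ∈ Icc (0:ℝ) 1 := ⟨le_refl 0, zero_le_one⟩
    have hVs := V_sub hbd hl h00 hx
    have hV0 : (∫ t in (0:ℝ)..(0:ℝ), f t) = 0 := intervalIntegral.integral_same
    rw [hV0, sub_zero, sub_zero] at hVs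
    calc |V x| ≤ L * |x| := hVs
      _ ≤ L * 1 := by
          apply mul_le_mul_of_nonneg_left _ hL0
          rw [abs_of_nonneg hx.1]; exact hx.2
      _ = L := mul_one L
  have hd_pt : ∀ᵐ x ∂μ, ‖vstep n S x - V x‖ ≤ 2 * L / n := by
    rw [hμ]
    filter_upwards [ae_restrict_mem measurableSet_Icc] with x hx
    rw [Real.norm_eq_abs]
    exact hstepV x hx
  have hμuniv : μ univ = 1 := by
    rw [hμ, Measure.restrict_apply_univ, Real.volume_Icc]
    norm_num
  -- measurability
  have hgm : AEStronglyMeasurable (vstep n S) μ := (vstep_measurable n S).aestronglyMeasurable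
  have hVm : AEStronglyMeasurable V μ := by
    have hVc : ContinuousOn V (Icc (0:ℝ) 1) := by
      apply LipschitzOnWith.continuousOn (K := L.toNNReal)
      apply LipschitzOnWith.of_dist_le_mul
      intro x hx y hy
      rw [Real.dist_eq, Real.dist_eq]
      have hVs := V_sub hbd hl hy hx
      calc |V x - V y| ≤ L * |x - y| := hVs
        _ ≤ ↑L.toNNReal * |x - y| := by
            apply mul_le_mul_of_nonneg_right _ (abs_nonneg _)
            rw [Real.coe_toNNReal']; exact le_max_left _ _
    rw [hμ]
    exact hVc.aestronglyMeasurable measurableSet_Icc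
  -- eLpNorm bounds
  have hbnd : ∀ (h : ℝ → ℝ) (C : ℝ), (∀ᵐ x ∂μ, ‖h x‖ ≤ C) →
      eLpNorm h p μ ≤ ENNReal.ofReal C := by
    intro h C hC
    calc eLpNorm h p μ ≤ μ univ ^ p.toReal⁻¹ * ENNReal.ofReal C :=
        eLpNorm_le_of_ae_bound hC
      _ = ENNReal.ofReal C := by rw [hμuniv, ENNReal.one_rpow, one_mul]
  have ha_le : eLpNorm V p μ ≤ ENNReal.ofReal L := hbnd V L hV_bd
  have hb_le : eLpNorm (vstep n S) p μ ≤ ENNReal.ofReal L := hbnd _ L hg_bd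
  have hd_le : eLpNorm (fun x => vstep n S x - V x) p μ ≤ ENNReal.ofReal (2 * L / n) :=
    hbnd _ _ hd_pt
  have ha_ne : eLpNorm V p μ ≠ ⊤ := (lt_of_le_of_lt ha_le ENNReal.ofReal_lt_top).ne
  have hb_ne : eLpNorm (vstep n S) p μ ≠ ⊤ := (lt_of_le_of_lt hb_le ENNReal.ofReal_lt_top).ne
  have hd_ne : eLpNorm (fun x => vstep n S x - V x) p μ ≠ ⊤ :=
    (lt_of_le_of_lt hd_le ENNReal.ofReal_lt_top).ne
  -- triangle inequalities
  have h1 : eLpNorm (vstep n S) p μ ≤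
      eLpNorm V p μ + eLpNorm (fun x => vstep n S x - V x) p μ := by
    have heq : vstep n S = V + fun x => vstep n S x - V x := by
      funext x; simp
    calc eLpNorm (vstep n S) p μ
        = eLpNorm (V + fun x => vstep n S x - V x) p μ := by rw [← heq]
      _ ≤ _ := eLpNorm_add_le hVm (hgm.sub hVm) hp
  have h2 : eLpNorm V p μ ≤
      eLpNorm (vstep n S) p μ + eLpNorm (fun x => vstep n S x - V x) p μ := by
    have heq : V = vstep n S + fun x => V x - vstep n S x := by
      funext x; simp
    have hneg : eLpNorm (fun x => V x - vstep n S x) p μ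
        = eLpNorm (fun x => vstep n S x - V x) p μ := by
      have hfun : (fun x => V x - vstep n S x) = -(fun x => vstep n S x - V x) := by
        funext x; show V x - vstep n S x = -(vstep n S x - V x); ring
      rw [hfun, eLpNorm_neg]
    calc eLpNorm V p μ
        = eLpNorm (vstep n S + fun x => V x - vstep n S x) p μ := by rw [← heq]
      _ ≤ eLpNorm (vstep n S) p μ + eLpNorm (fun x => V x - vstep n S x) p μ :=
          eLpNorm_add_le hgm (hVm.sub hgm) hp
      _ = _ := by rw [hneg]
  -- to real numbers
  have hdr : (eLpNorm (fun x => vstep n S x - V x) p μ).toReal ≤ 2 * L / n := by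
    calc (eLpNorm (fun x => vstep n S x - V x) p μ).toReal
        ≤ (ENNReal.ofReal (2 * L / n)).toReal :=
          ENNReal.toReal_mono ENNReal.ofReal_ne_top hd_le
      _ = 2 * L / n := ENNReal.toReal_ofReal (by positivity)
  have h1r : (eLpNorm (vstep n S) p μ).toReal ≤
      (eLpNorm V p μ).toReal + (eLpNorm (fun x => vstep n S x - V x) p μ).toReal := by
    rw [← ENNReal.toReal_add ha_ne hd_ne]
    exact ENNReal.toReal_mono (ENNReal.add_ne_top.2 ⟨ha_ne, hd_ne⟩) h1
  have h2r : (eLpNorm V p μ).toReal ≤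
      (eLpNorm (vstep n S) p μ).toReal + (eLpNorm (fun x => vstep n S x - V x) p μ).toReal := by
    rw [← ENNReal.toReal_add hb_ne hd_ne]
    exact ENNReal.toReal_mono (ENNReal.add_ne_top.2 ⟨hb_ne, hd_ne⟩) h2
  have hcont : contVolterraNorm p f = (eLpNorm V p μ).toReal := by
    rw [contVolterraNorm, ← hV, ← hμ]
  rw [hdisc, hcont]
  rw [abs_sub_le_iff]
  constructor <;> linarith
end

section
/- Let G be absolutely continuous on [0,1] with G(1) = 0 and derivative g satisfying ‖g‖_q ≤ 1 for some q ∈ [1,∞], and let ψ : [0,1] → [0,1] be continuously differentiable and monotonically increasing. Then ‖G∘ψ − G‖_q ≤ max_{x∈[0,1]} |x − ψ(x)|. -/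
open MeasureTheory Set intervalIntegral
open scoped ENNReal NNReal
open scoped Interval

/-- Lemma: if `G(x) = -∫_x^1 g(t) dt` with `‖g‖_q ≤ 1` and `ψ : [0,1] → [0,1]` is `C¹`
and monotonically increasing, then `‖G∘ψ - G‖_{L^q[0,1]} ≤ max_x |x - ψ(x)|`. -/
theorem comp_sub_self_eLpNorm_le (q : ℝ≥0∞) (hq : 1 ≤ q)
    (g G : ℝ → ℝ) (hg : IntegrableOn g (Icc (0:ℝ) 1))
    (hG : ∀ x, G x = -∫ t in x..(1:ℝ), g t)
    (hgq : eLpNorm g q (volume.restrict (Icc (0:ℝ) 1)) ≤ 1)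
    (ψ : ℝ → ℝ) (hψdiff : ContDiff ℝ 1 ψ) (hψmono : StrictMonoOn ψ (Icc (0:ℝ) 1))
    (hmaps : MapsTo ψ (Icc (0:ℝ) 1) (Icc (0:ℝ) 1))
    (ε : ℝ) (hε : ∀ x ∈ Icc (0:ℝ) 1, |x - ψ x| ≤ ε) :
    eLpNorm (fun x => G (ψ x) - G x) q (volume.restrict (Icc (0:ℝ) 1))
      ≤ ENNReal.ofReal ε := by
  have hε0 : 0 ≤ ε := le_trans (abs_nonneg _) (hε 0 (by constructor <;> norm_num))
  have hψc : Continuous ψ := hψdiff.continuous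
  -- a measurable representative of g
  obtain ⟨g', hg'm, hgg'⟩ := hg.aestronglyMeasurable.aemeasurable
  set f : ℝ → ℝ≥0∞ := fun t => (‖g' t‖₊ : ℝ≥0∞) with hf
  have hfm : Measurable f := hg'm.enorm
  have hTsub : ∀ x ∈ Icc (0:ℝ) 1, Ι x (ψ x) ⊆ Icc (0:ℝ) 1 := fun x hx =>
    uIoc_subset_uIcc.trans (uIcc_subset_Icc hx (hmaps hx))
  -- key pointwise estimate
  have hkey : ∀ x ∈ Icc (0:ℝ) 1,
      (‖G (ψ x) - G x‖₊ : ℝ≥0∞) ≤ ∫⁻ t in Ι x (ψ x), f t := by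
    intro x hx
    have hx1 : IntervalIntegrable g volume x (ψ x) :=
      (hg.mono_set (uIcc_subset_Icc hx (hmaps hx))).intervalIntegrable
    have hx2 : IntervalIntegrable g volume (ψ x) 1 :=
      (hg.mono_set (uIcc_subset_Icc (hmaps hx) (right_mem_Icc.2 zero_le_one))).intervalIntegrable
    have hadd := intervalIntegral.integral_add_adjacent_intervals hx1 hx2
    have hGeq : G (ψ x) - G x = ∫ t in x..(ψ x), g t := by
      rw [hG, hG]; linarith [hadd]
    have hnn : ‖G (ψ x) - G x‖₊ = ‖∫ t in Ι x (ψ x), g t‖₊ := by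
      rw [hGeq, intervalIntegral_eq_integral_uIoc]
      split_ifs <;> simp [nnnorm_smul]
    rw [hnn]
    refine le_trans (enorm_integral_le_lintegral_enorm _) (le_of_eq ?_)
    refine lintegral_congr_ae ?_
    filter_upwards [ae_restrict_of_ae_restrict_of_subset (hTsub x hx) hgg'] with t ht
    rw [hf]; simp [ht, enorm_eq_nnnorm]
  -- the "kernel" set
  set S : Set (ℝ × ℝ) := {p | p.2 ∈ Ι p.1 (ψ p.1)} with hS
  have hSm : MeasurableSet S := by
    have : S = ({p : ℝ × ℝ | p.1 < p.2} ∩ {p : ℝ × ℝ | p.2 ≤ ψ p.1})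
        ∪ ({p : ℝ × ℝ | ψ p.1 < p.2} ∩ {p : ℝ × ℝ | p.2 ≤ p.1}) := by
      ext p; simp [hS, Set.mem_uIoc, and_comm]
    rw [this]
    exact (MeasurableSet.union
      ((measurableSet_lt measurable_fst measurable_snd).inter
        (measurableSet_le measurable_snd (hψc.measurable.comp measurable_fst)))
      ((measurableSet_lt (hψc.measurable.comp measurable_fst) measurable_snd).inter
        (measurableSet_le measurable_snd measurable_fst)))
  set ind : ℝ → ℝ → ℝ≥0∞ := fun x t => S.indicator (fun _ => (1:ℝ≥0∞)) (x, t) with hind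
  have hindeq : ∀ x t, ind x t = (Ι x (ψ x)).indicator (fun _ => (1:ℝ≥0∞)) t := by
    intro x t
    by_cases h : t ∈ Ι x (ψ x) <;> simp [hind, hS, h]
  -- bound (A): the t-measure of each slice is at most ε
  have hA : ∀ x ∈ Icc (0:ℝ) 1, ∫⁻ t, ind x t ∂volume ≤ ENNReal.ofReal ε := by
    intro x hx
    simp only [hindeq]
    rw [lintegral_indicator measurableSet_uIoc, setLIntegral_one]
    rw [Set.uIoc, Real.volume_Ioc, max_sub_min_eq_abs]
    exact ENNReal.ofReal_le_ofReal ((abs_sub_comm _ _).le.trans (hε x hx))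
  -- bound (B): the x-measure of each slice is at most ε
  have hB : ∀ t, ∫⁻ x in Icc (0:ℝ) 1, ind x t ∂volume
      ≤ (Icc (0:ℝ) 1).indicator (fun _ => ENNReal.ofReal ε) t := by
    intro t
    have hAtm : MeasurableSet {x : ℝ | (x, t) ∈ S} := measurable_prodMk_right hSm
    have hint : ∫⁻ x in Icc (0:ℝ) 1, ind x t ∂volume
        = volume ({x : ℝ | (x, t) ∈ S} ∩ Icc (0:ℝ) 1) := by
      have : ∀ x, ind x t = ({x : ℝ | (x, t) ∈ S}).indicator (fun _ => (1:ℝ≥0∞)) x := by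
        intro x; by_cases h : (x, t) ∈ S <;> simp [hind, h]
      simp only [this]
      rw [lintegral_indicator hAtm, setLIntegral_one, Measure.restrict_apply hAtm]
    rw [hint]
    by_cases ht : t ∈ Icc (0:ℝ) 1
    · rw [Set.indicator_of_mem ht]
      by_cases hcase : ∃ x₀ ∈ Icc (0:ℝ) 1, ψ x₀ < t ∧ t ≤ x₀
      · obtain ⟨x₀, hx₀, hψx₀, htx₀⟩ := hcase
        have hsub : {x : ℝ | (x, t) ∈ S} ∩ Icc (0:ℝ) 1 ⊆ Ico t (t + ε) := by
          rintro x ⟨hxS, hx⟩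
          rcases Set.mem_uIoc.1 hxS with ⟨h1, h2⟩ | ⟨h1, h2⟩
          · exfalso
            have hxlt : x < x₀ := lt_of_lt_of_le h1 htx₀
            exact absurd (hψmono hx hx₀ hxlt) (not_lt.2 (le_trans hψx₀.le (h2.trans (le_refl _))))
          · refine ⟨h2, ?_⟩
            have := (abs_le.1 (hε x hx)).2
            linarith
        refine le_trans (measure_mono hsub) ?_
        rw [Real.volume_Ico]
        exact le_of_eq (by ring_nf)
      · push_neg at hcase
        have hsub : {x : ℝ | (x, t) ∈ S} ∩ Icc (0:ℝ) 1 ⊆ Ico (t - ε) t := by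
          rintro x ⟨hxS, hx⟩
          rcases Set.mem_uIoc.1 hxS with ⟨h1, h2⟩ | ⟨h1, h2⟩
          · refine ⟨?_, h1⟩
            have := (abs_le.1 (hε x hx)).1
            linarith
          · exact absurd h2 (not_le.2 (hcase x hx h1))
        refine le_trans (measure_mono hsub) ?_
        rw [Real.volume_Ico]
        exact le_of_eq (by ring_nf)
    · rw [Set.indicator_of_notMem ht]
      have : {x : ℝ | (x, t) ∈ S} ∩ Icc (0:ℝ) 1 = ∅ := by
        ext x
        simp only [Set.mem_inter_iff, Set.mem_setOf_eq, Set.mem_empty_iff_false, iff_false,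
          not_and]
        intro hxS hx
        exact ht (hTsub x hx hxS)
      rw [this]; simp
  -- rewrite the inner integral
  have hindint : ∀ x, ∫⁻ t, ind x t * f t ∂volume = ∫⁻ t in Ι x (ψ x), f t := by
    intro x
    have : ∀ t, ind x t * f t = (Ι x (ψ x)).indicator f t := by
      intro t
      rw [hindeq]
      by_cases h : t ∈ Ι x (ψ x) <;> simp [h]
    simp only [this]
    exact lintegral_indicator measurableSet_uIoc f
  -- split on q = ∞
  rcases eq_or_ne q ∞ with hqtop | hqtop
  · -- case q = ∞
    subst hqtop
    rw [eLpNorm_exponent_top]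
    have hgbd : ∀ᵐ t ∂(volume.restrict (Icc (0:ℝ) 1)), f t ≤ 1 := by
      have h1 : ∀ᵐ t ∂(volume.restrict (Icc (0:ℝ) 1)),
          (‖g t‖₊ : ℝ≥0∞) ≤ eLpNormEssSup g (volume.restrict (Icc (0:ℝ) 1)) :=
        ae_le_eLpNormEssSup
      rw [eLpNorm_exponent_top] at hgq
      filter_upwards [h1, hgg'] with t ht ht' using by
        rw [hf]; simp only [← ht']; exact le_trans ht hgq
    refine essSup_le_of_ae_le _ ?_
    filter_upwards [ae_restrict_mem measurableSet_Icc] with x hx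
    refine le_trans (hkey x hx) ?_
    have hb : ∀ᵐ t ∂(volume.restrict (Ι x (ψ x))), f t ≤ 1 :=
      ae_restrict_of_ae_restrict_of_subset (hTsub x hx) hgbd
    calc ∫⁻ t in Ι x (ψ x), f t ≤ ∫⁻ t in Ι x (ψ x), 1 := lintegral_mono_ae hb
      _ = volume (Ι x (ψ x)) := setLIntegral_one _
      _ ≤ ENNReal.ofReal ε := by
        rw [Set.uIoc, Real.volume_Ioc, max_sub_min_eq_abs]
        exact ENNReal.ofReal_le_ofReal ((abs_sub_comm _ _).le.trans (hε x hx))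
  · -- case q < ∞
    have hq0 : q ≠ 0 := by positivity
    set r : ℝ := q.toReal with hr
    have hr1 : 1 ≤ r := by
      rw [hr, ← ENNReal.toReal_one]
      exact ENNReal.toReal_mono hqtop hq
    have hr0 : (0:ℝ) < r := lt_of_lt_of_le one_pos hr1
    -- the Lᵖ bound on g'
    have hfr : ∫⁻ t in Icc (0:ℝ) 1, f t ^ r ∂volume ≤ 1 := by
      have h1 : eLpNorm g' q (volume.restrict (Icc (0:ℝ) 1)) ≤ 1 := by
        rwa [← eLpNorm_congr_ae hgg']
      rw [eLpNorm_eq_lintegral_rpow_enorm_toReal hq0 hqtop] at h1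
      have h2 := ENNReal.rpow_le_rpow h1 hr0.le
      rwa [← ENNReal.rpow_mul, one_div, inv_mul_cancel₀ hr0.ne', ENNReal.rpow_one,
        ENNReal.one_rpow] at h2
    -- Hölder-type pointwise bound
    have hHolder : ∀ x ∈ Icc (0:ℝ) 1,
        (∫⁻ t, ind x t * f t ∂volume) ^ r
          ≤ (ENNReal.ofReal ε) ^ (r - 1) * ∫⁻ t, ind x t * f t ^ r ∂volume := by
      intro x hx
      rcases eq_or_lt_of_le hr1 with hr1' | hr1'
      · -- r = 1
        rw [← hr1']
        simp only [sub_self, ENNReal.rpow_zero, one_mul, ENNReal.rpow_one]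
        exact le_refl _
      · -- 1 < r
        have hsr : (Real.conjExponent r).HolderConjugate r :=
          (Real.HolderConjugate.conjExponent hr1').symm
        have hindm : Measurable (ind x) :=
          (measurable_const.indicator hSm).comp measurable_prodMk_left
        have h1 := ENNReal.lintegral_mul_le_Lp_mul_Lq volume hsr hindm.aemeasurable
          (hindm.mul hfm).aemeasurable
        have e1 : ∀ t, ind x t * (ind x t * f t) = ind x t * f t := by
          intro t
          by_cases h : (x, t) ∈ S <;> simp [hind, h]
        have e2 : ∀ t, ind x t ^ Real.conjExponent r = ind x t := by
          intro t
          by_cases h : (x, t) ∈ S <;>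
            simp [hind, h, ENNReal.zero_rpow_of_pos hsr.pos]
        have e3 : ∀ t, (ind x t * f t) ^ r = ind x t * f t ^ r := by
          intro t
          by_cases h : (x, t) ∈ S <;>
            simp [hind, h, ENNReal.zero_rpow_of_pos hr0]
        simp only [Pi.mul_apply, e1, e2, e3] at h1
        have h2 := ENNReal.rpow_le_rpow h1 hr0.le
        rw [ENNReal.mul_rpow_of_nonneg _ _ hr0.le, ← ENNReal.rpow_mul,
          ← ENNReal.rpow_mul] at h2
        have e4 : 1 / Real.conjExponent r * r = r - 1 := by
          rw [one_div, ← div_eq_inv_mul]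
          exact hsr.symm.div_conj_eq_sub_one
        have e5 : 1 / r * r = 1 := by field_simp
        rw [e4, e5, ENNReal.rpow_one] at h2
        refine le_trans h2 (mul_le_mul_left ?_ _)
        exact ENNReal.rpow_le_rpow (hA x hx) (by linarith)
    -- the main computation
    have hmid : ∫⁻ x in Icc (0:ℝ) 1, (‖G (ψ x) - G x‖₊ : ℝ≥0∞) ^ r ∂volume
        ≤ (ENNReal.ofReal ε) ^ r := by
      have hswapm : AEMeasurable (Function.uncurry fun x t => ind x t * f t ^ r)
          ((volume.restrict (Icc (0:ℝ) 1)).prod volume) := by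
        refine Measurable.aemeasurable ?_
        have : (Function.uncurry fun x t => ind x t * f t ^ r)
            = fun p : ℝ × ℝ => S.indicator (fun _ => (1:ℝ≥0∞)) p * f p.2 ^ r := by
          ext p; cases p; rfl
        rw [this]
        exact (measurable_const.indicator hSm).mul ((hfm.comp measurable_snd).pow_const r)
      calc ∫⁻ x in Icc (0:ℝ) 1, (‖G (ψ x) - G x‖₊ : ℝ≥0∞) ^ r ∂volume
          ≤ ∫⁻ x in Icc (0:ℝ) 1,
              (ENNReal.ofReal ε) ^ (r - 1) * ∫⁻ t, ind x t * f t ^ r ∂volume ∂volume := by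
            refine lintegral_mono_ae ?_
            filter_upwards [ae_restrict_mem measurableSet_Icc] with x hx
            refine le_trans (ENNReal.rpow_le_rpow ?_ hr0.le) (hHolder x hx)
            rw [hindint]
            exact hkey x hx
        _ = (ENNReal.ofReal ε) ^ (r - 1)
            * ∫⁻ x in Icc (0:ℝ) 1, ∫⁻ t, ind x t * f t ^ r ∂volume ∂volume :=
            lintegral_const_mul' _ _
              (ENNReal.rpow_ne_top_of_nonneg (by linarith) ENNReal.ofReal_ne_top)
        _ = (ENNReal.ofReal ε) ^ (r - 1)
            * ∫⁻ t, ∫⁻ x in Icc (0:ℝ) 1, ind x t * f t ^ r ∂volume ∂volume := by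
            rw [lintegral_lintegral_swap hswapm]
        _ = (ENNReal.ofReal ε) ^ (r - 1)
            * ∫⁻ t, (∫⁻ x in Icc (0:ℝ) 1, ind x t ∂volume) * f t ^ r ∂volume := by
            congr 1
            refine lintegral_congr fun t => ?_
            exact lintegral_mul_const' _ _
              (ENNReal.rpow_ne_top_of_nonneg hr0.le ENNReal.coe_ne_top)
        _ ≤ (ENNReal.ofReal ε) ^ (r - 1)
            * ∫⁻ t, (Icc (0:ℝ) 1).indicator (fun _ => ENNReal.ofReal ε) t * f t ^ r ∂volume := by
            refine mul_le_mul_right (lintegral_mono fun t => mul_le_mul_left (hB t) _) _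
        _ = (ENNReal.ofReal ε) ^ (r - 1)
            * (ENNReal.ofReal ε * ∫⁻ t in Icc (0:ℝ) 1, f t ^ r ∂volume) := by
            congr 1
            have : ∀ t, (Icc (0:ℝ) 1).indicator (fun _ => ENNReal.ofReal ε) t * f t ^ r
                = (Icc (0:ℝ) 1).indicator (fun t => ENNReal.ofReal ε * f t ^ r) t := by
              intro t; by_cases h : t ∈ Icc (0:ℝ) 1 <;> simp [h]
            simp only [this]
            rw [lintegral_indicator measurableSet_Icc,
              lintegral_const_mul' _ _ ENNReal.ofReal_ne_top]
        _ ≤ (ENNReal.ofReal ε) ^ (r - 1) * (ENNReal.ofReal ε * 1) := by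
            exact mul_le_mul_right (mul_le_mul_right hfr _) _
        _ = (ENNReal.ofReal ε) ^ r := by
            rw [mul_one]
            by_cases hε' : ENNReal.ofReal ε = 0
            · rw [hε']
              simp [ENNReal.zero_rpow_of_pos hr0]
            · calc (ENNReal.ofReal ε) ^ (r - 1) * ENNReal.ofReal ε
                  = (ENNReal.ofReal ε) ^ (r - 1) * (ENNReal.ofReal ε) ^ (1:ℝ) := by
                    rw [ENNReal.rpow_one]
                _ = (ENNReal.ofReal ε) ^ (r - 1 + 1) :=
                    (ENNReal.rpow_add _ _ hε' ENNReal.ofReal_ne_top).symm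
                _ = (ENNReal.ofReal ε) ^ r := by norm_num
    rw [eLpNorm_eq_lintegral_rpow_enorm_toReal hq0 hqtop]
    have := ENNReal.rpow_le_rpow hmid (le_of_lt (by positivity : (0:ℝ) < 1 / r))
    rwa [← ENNReal.rpow_mul, mul_one_div_cancel hr0.ne', ENNReal.rpow_one] at this
end
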